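/- arXiv:2402.12306 — 2 statements merged into one kernel-verified Lean document; each statement's English description precedes it below -/
import Mathlib

section
/- Let d ≥ 3, δ > 0, C₀ > 0 and λ ≥ λ₀ > 0. Let p ∈ C^∞(ℝ^d) be real-valued with |∂^β p(x)| ≤ C₀ |x|^{-(2+|β|+δ)} for all |x| ≥ 1 and every multi-index β. Let g ∈ C^∞(ℝ^d ∖ {0}) be real-valued satisfying the Hamilton–Jacobi equation g² + 2g x·∇g + |x|²|∇g|² = 1 + p/λ on ℝ^d ∖ {0}, with 1/2 ≤ g(x) ≤ 2 for all x ≠ 0, and suppose the bounds |∂_i g(x)| ≤ (C₀/λ)|x|^{-(3+δ)}, |∂²_{ij} g(x)| ≤ C₀|x|^{-(4+δ)} and |∂_j Δ g(x)| ≤ (C₀/λ)|x|^{-(5+δ)} hold for |x| ≥ 1 and all i, j. Define F_{ij}(x) = −δ_{ij}(|x|²|∇g(x)|² + 2 g(x) x·∇g(x)) + |x|² ∂_i g(x) ∂_j g(x) + 2 x_i g(x) ∂_j g(x) + 2 x_j g(x) ∂_i g(x) + g(x) |x|² ∂²_{ij} g(x). Then there exists a constant C, depending only on d, δ, C₀ and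 λ₀, such that |∇(Σ_{i=1}^d F_{ii})(x)| ≤ C |x|^{-(3+δ)} for all |x| ≥ 1. -/
/- STATEMENT 6: decay of the gradient of the trace of F:
   |∇(Σ_i F_{ii})(x)| ≤ C |x|^{-(3+δ)} for |x| ≥ 1. -/

noncomputable section

abbrev Euc (d : ℕ) := EuclideanSpace ℝ (Fin d)

/-- The `i`-th partial derivative `∂_i f`. -/
def pd {d : ℕ} (f : Euc d → ℝ) (i : Fin d) (x : Euc d) : ℝ :=
  fderiv ℝ f x (EuclideanSpace.single i 1)

/-- The second partial derivative `∂²_{ij} f = ∂_i ∂_j f`. -/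
def pd2 {d : ℕ} (f : Euc d → ℝ) (i j : Fin d) (x : Euc d) : ℝ :=
  pd (fun y => pd f j y) i x

/-- `|∇f|²` in coordinates. -/
def gradSq {d : ℕ} (f : Euc d → ℝ) (x : Euc d) : ℝ := ∑ i, (pd f i x) ^ 2

/-- `x · ∇f` in coordinates. -/
def xDot {d : ℕ} (f : Euc d → ℝ) (x : Euc d) : ℝ := ∑ i, x i * pd f i x

/-- The Laplacian `Δf = ∑_i ∂²_{ii} f`. -/
def lapl {d : ℕ} (f : Euc d → ℝ) (x : Euc d) : ℝ := ∑ i, pd2 f i i x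

/-- The matrix `F_{ij}` built from `g`. -/
def Fmat {d : ℕ} (g : Euc d → ℝ) (i j : Fin d) (x : Euc d) : ℝ :=
  -(if i = j then (1:ℝ) else 0) * (‖x‖ ^ 2 * gradSq g x + 2 * g x * xDot g x)
    + ‖x‖ ^ 2 * pd g i x * pd g j x
    + 2 * x i * g x * pd g j x + 2 * x j * g x * pd g i x
    + g x * ‖x‖ ^ 2 * pd2 g i j x

variable {d : ℕ}

lemma pd_add {f g : Euc d → ℝ} {x : Euc d} (hf : DifferentiableAt ℝ f x)
    (hg : DifferentiableAt ℝ g x) (j : Fin d) :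
    pd (fun y => f y + g y) j x = pd f j x + pd g j x := by
  simp [pd, fderiv_fun_add hf hg]

lemma pd_mul {f g : Euc d → ℝ} {x : Euc d} (hf : DifferentiableAt ℝ f x)
    (hg : DifferentiableAt ℝ g x) (j : Fin d) :
    pd (fun y => f y * g y) j x = pd f j x * g x + f x * pd g j x := by
  simp [pd, fderiv_fun_mul hf hg]; ring

lemma pd_const_mul {f : Euc d → ℝ} {x : Euc d} (hf : DifferentiableAt ℝ f x) (c : ℝ) (j : Fin d) :
    pd (fun y => c * f y) j x = c * pd f j x := by
  simp [pd, fderiv_const_mul hf c]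

lemma pd_sum {ι : Type*} {s : Finset ι} {f : ι → Euc d → ℝ} {x : Euc d}
    (hf : ∀ i ∈ s, DifferentiableAt ℝ (f i) x) (j : Fin d) :
    pd (fun y => ∑ i ∈ s, f i y) j x = ∑ i ∈ s, pd (f i) j x := by
  simp [pd, fderiv_fun_sum hf]

lemma pd_sq {f : Euc d → ℝ} {x : Euc d} (hf : DifferentiableAt ℝ f x) (j : Fin d) :
    pd (fun y => f y ^ 2) j x = 2 * f x * pd f j x := by
  have h := pd_mul hf hf j
  have : (fun y => f y ^ 2) = fun y => f y * f y := by funext y; ring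
  rw [this, h]; ring

lemma diff_coord (i : Fin d) {x : Euc d} : DifferentiableAt ℝ (fun y : Euc d => y i) x :=
  (EuclideanSpace.proj (𝕜 := ℝ) i).differentiableAt

lemma pd_coord (i j : Fin d) (x : Euc d) :
    pd (fun y : Euc d => y i) j x = if i = j then 1 else 0 := by
  have : (fun y : Euc d => y i) = (EuclideanSpace.proj (𝕜 := ℝ) i) := rfl
  rw [pd, this, ContinuousLinearMap.fderiv]
  simp [EuclideanSpace.single_apply]


lemma normsq_eq : (fun y : Euc d => ‖y‖ ^ 2) = fun y => ∑ i, y i ^ 2 := by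
  funext y
  rw [EuclideanSpace.norm_eq, Real.sq_sqrt (by positivity)]
  simp [sq_abs]

lemma diff_normsq {x : Euc d} : DifferentiableAt ℝ (fun y : Euc d => ‖y‖ ^ 2) x := by
  rw [normsq_eq]
  exact DifferentiableAt.fun_sum fun i _ => (diff_coord i).fun_pow 2

lemma pd_normsq (j : Fin d) (x : Euc d) : pd (fun y : Euc d => ‖y‖ ^ 2) j x = 2 * x j := by
  rw [normsq_eq, pd_sum (fun i _ => (diff_coord i).fun_pow 2)]
  have : ∀ i, pd (fun y : Euc d => y i ^ 2) j x = 2 * x i * (if i = j then 1 else 0) := by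
    intro i; rw [pd_sq (diff_coord i), pd_coord]
  simp [this, Finset.sum_ite_eq', mul_comm]

lemma contDiffOn_pd {g : Euc d → ℝ} (hg : ContDiffOn ℝ (⊤ : ℕ∞) g {0}ᶜ) (i : Fin d) :
    ContDiffOn ℝ (⊤ : ℕ∞) (pd g i) {0}ᶜ :=
  (hg.fderiv_of_isOpen isOpen_compl_singleton (by simp)).clm_apply contDiffOn_const

lemma diffAt_of_cdOn {g : Euc d → ℝ} (hg : ContDiffOn ℝ (⊤ : ℕ∞) g {0}ᶜ) {x : Euc d} (hx : x ≠ 0) :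
    DifferentiableAt ℝ g x :=
  (hg.differentiableOn (by simp)).differentiableAt (isOpen_compl_singleton.mem_nhds (by simpa))

lemma abs_coord_le_norm (x : Euc d) (i : Fin d) : |x i| ≤ ‖x‖ := by
  rw [EuclideanSpace.norm_eq, ← Real.sqrt_sq_eq_abs]
  apply Real.sqrt_le_sqrt
  have := Finset.single_le_sum (f := fun i => ‖x i‖ ^ 2) (fun i _ => by positivity)
    (Finset.mem_univ i)
  simpa [sq_abs] using this


lemma trace_Fmat (g : Euc d → ℝ) (y : Euc d) :
    ∑ i, Fmat g i i y
      = (1 - (d:ℝ)) * (‖y‖ ^ 2 * gradSq g y)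
        + ((4 - 2*(d:ℝ)) * (g y * xDot g y) + g y * (‖y‖ ^ 2 * lapl g y)) := by
  have h : ∀ i : Fin d, Fmat g i i y =
      (-(‖y‖ ^ 2 * gradSq g y + 2 * g y * xDot g y))
      + (‖y‖ ^ 2 * (pd g i y) ^ 2 + ((4 * g y) * (y i * pd g i y)
        + (g y * ‖y‖ ^ 2) * pd2 g i i y)) := by
    intro i; simp only [Fmat, eq_self_iff_true, if_true]; ring
  rw [Finset.sum_congr rfl fun i _ => h i, Finset.sum_add_distrib, Finset.sum_const,
    Finset.card_univ, Fintype.card_fin, Finset.sum_add_distrib, Finset.sum_add_distrib,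
    ← Finset.mul_sum, ← Finset.mul_sum, ← Finset.mul_sum]
  simp only [nsmul_eq_mul]
  rw [show (∑ i, (pd g i y) ^ 2) = gradSq g y from rfl,
    show (∑ i, y i * pd g i y) = xDot g y from rfl,
    show (∑ i, pd2 g i i y) = lapl g y from rfl]
  ring

lemma pd_trace (g : Euc d → ℝ) (hg : ContDiffOn ℝ (⊤ : ℕ∞) g {0}ᶜ) {x : Euc d} (hx : x ≠ 0)
    (j : Fin d) :
    pd (fun y => ∑ i, Fmat g i i y) j x
      = (1 - (d:ℝ)) * (2 * x j * gradSq g x + ‖x‖ ^ 2 * ∑ i, 2 * pd g i x * pd2 g j i x)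
        + ((4 - 2*(d:ℝ)) * (pd g j x * xDot g x
            + g x * ((pd g j x + ∑ i, x i * pd2 g j i x)))
          + (pd g j x * (‖x‖ ^ 2 * lapl g x)
            + g x * (2 * x j * lapl g x + ‖x‖ ^ 2 * pd (fun y => lapl g y) j x))) := by
  have hgd : DifferentiableAt ℝ g x := diffAt_of_cdOn hg hx
  have hpdg : ∀ i, DifferentiableAt ℝ (pd g i) x := fun i =>
    diffAt_of_cdOn (contDiffOn_pd hg i) hx
  have hpd2 : ∀ i j', DifferentiableAt ℝ (pd2 g i j') x := fun i j' =>
    diffAt_of_cdOn (contDiffOn_pd (contDiffOn_pd hg j') i) hx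
  have hG2 : DifferentiableAt ℝ (gradSq g) x :=
    DifferentiableAt.fun_sum fun i _ => (hpdg i).fun_pow 2
  have hXD : DifferentiableAt ℝ (xDot g) x :=
    DifferentiableAt.fun_sum fun i _ => (diff_coord i).fun_mul (hpdg i)
  have hL : DifferentiableAt ℝ (lapl g) x :=
    DifferentiableAt.fun_sum fun i _ => hpd2 i i
  have hpdG2 : pd (gradSq g) j x = ∑ i, 2 * pd g i x * pd2 g j i x := by
    show pd (fun y => ∑ i, pd g i y ^ 2) j x = _
    rw [pd_sum (fun i _ => (hpdg i).fun_pow 2)]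
    exact Finset.sum_congr rfl fun i _ => pd_sq (hpdg i) j
  have hpdXD : pd (xDot g) j x = pd g j x + ∑ i, x i * pd2 g j i x := by
    show pd (fun y => ∑ i, y i * pd g i y) j x = _
    rw [pd_sum (fun i _ => (diff_coord i).fun_mul (hpdg i))]
    have h1 : ∀ i : Fin d, pd (fun y => y i * pd g i y) j x
        = (if i = j then (1:ℝ) else 0) * pd g i x + x i * pd2 g j i x := by
      intro i; rw [pd_mul (diff_coord i) (hpdg i), pd_coord]; rfl
    rw [Finset.sum_congr rfl fun i _ => h1 i, Finset.sum_add_distrib]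
    simp [ite_mul, Finset.sum_ite_eq']
  have e1 : pd (fun y => ‖y‖ ^ 2 * gradSq g y) j x
      = 2 * x j * gradSq g x + ‖x‖ ^ 2 * ∑ i, 2 * pd g i x * pd2 g j i x := by
    rw [pd_mul diff_normsq hG2, pd_normsq, hpdG2]
  have e2 : pd (fun y => g y * xDot g y) j x
      = pd g j x * xDot g x + g x * (pd g j x + ∑ i, x i * pd2 g j i x) := by
    rw [pd_mul hgd hXD, hpdXD]
  have e3 : pd (fun y => g y * (‖y‖ ^ 2 * lapl g y)) j x
      = pd g j x * (‖x‖ ^ 2 * lapl g x)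
        + g x * (2 * x j * lapl g x + ‖x‖ ^ 2 * pd (fun y => lapl g y) j x) := by
    rw [pd_mul hgd (diff_normsq.fun_mul hL), pd_mul diff_normsq hL, pd_normsq]
  have hfun : (fun y => ∑ i, Fmat g i i y)
      = fun y => (1 - (d:ℝ)) * (‖y‖ ^ 2 * gradSq g y)
        + ((4 - 2*(d:ℝ)) * (g y * xDot g y) + g y * (‖y‖ ^ 2 * lapl g y)) :=
    funext fun y => trace_Fmat g y
  rw [hfun, pd_add ((diff_normsq.fun_mul hG2).const_mul _)
      (((hgd.fun_mul hXD).const_mul _).fun_add (hgd.fun_mul (diff_normsq.fun_mul hL))),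
    pd_const_mul (diff_normsq.fun_mul hG2), e1,
    pd_add ((hgd.fun_mul hXD).const_mul _) (hgd.fun_mul (diff_normsq.fun_mul hL)),
    pd_const_mul (hgd.fun_mul hXD), e2, e3]

lemma mul_abs_le {p q P Q : ℝ} (hp : |p| ≤ P) (hq : |q| ≤ Q) : |p * q| ≤ P * Q := by
  rw [abs_mul]; exact mul_le_mul hp hq (abs_nonneg _) ((abs_nonneg p).trans hp)

lemma le_aux {c s r : ℝ} (hc : 0 ≤ c) (hs : s ≤ 1) (hr : 0 ≤ r) : c * (s * r) ≤ c * r := by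
  have h := mul_le_mul_of_nonneg_right hs hr
  calc c * (s * r) ≤ c * (1 * r) := mul_le_mul_of_nonneg_left h hc
  _ = c * r := by ring

lemma pow_mul_rpow_le {B : ℝ} (hB : 1 ≤ B) (n : ℕ) (t u : ℝ) (h : (n : ℝ) + t ≤ u) :
    B ^ n * B ^ t ≤ B ^ u := by
  have hB0 : (0:ℝ) < B := lt_of_lt_of_le one_pos hB
  calc B ^ n * B ^ t = B ^ ((n : ℝ) + t) := by rw [Real.rpow_add hB0, Real.rpow_natCast]
  _ ≤ B ^ u := Real.rpow_le_rpow_of_exponent_le hB h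

theorem grad_trace_Fmat_decay
    {d : ℕ} (hd : 3 ≤ d) (δ C₀ lam0 : ℝ) (hδ : 0 < δ) (hC₀ : 0 < C₀) (hlam0 : 0 < lam0) :
    ∃ C : ℝ, 0 < C ∧
      ∀ lam : ℝ, lam0 ≤ lam →
      ∀ p g : Euc d → ℝ,
        ContDiff ℝ (⊤ : ℕ∞) p →
        (∀ n : ℕ, ∀ x : Euc d, 1 ≤ ‖x‖ →
          ‖iteratedFDeriv ℝ n p x‖ ≤ C₀ * ‖x‖ ^ (-(2 + (n : ℝ) + δ))) →
        ContDiffOn ℝ (⊤ : ℕ∞) g {0}ᶜ →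
        (∀ x : Euc d, x ≠ 0 →
          (g x) ^ 2 + 2 * g x * xDot g x + ‖x‖ ^ 2 * gradSq g x = 1 + p x / lam) →
        (∀ x : Euc d, x ≠ 0 → 1 / 2 ≤ g x ∧ g x ≤ 2) →
        (∀ x : Euc d, 1 ≤ ‖x‖ → ∀ i : Fin d,
          |pd g i x| ≤ C₀ / lam * ‖x‖ ^ (-(3 + δ))) →
        (∀ x : Euc d, 1 ≤ ‖x‖ → ∀ i j : Fin d,
          |pd2 g i j x| ≤ C₀ * ‖x‖ ^ (-(4 + δ))) →
        (∀ x : Euc d, 1 ≤ ‖x‖ → ∀ j : Fin d,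
          |pd (fun y => lapl g y) j x| ≤ C₀ / lam * ‖x‖ ^ (-(5 + δ))) →
        ∀ x : Euc d, 1 ≤ ‖x‖ →
          Real.sqrt (∑ j, (pd (fun y => ∑ i, Fmat g i i y) j x) ^ 2)
            ≤ C * ‖x‖ ^ (-(3 + δ)) := by
  set a : ℝ := C₀ / lam0 with ha_def
  have ha : 0 < a := div_pos hC₀ hlam0
  set C1 : ℝ := (d:ℝ) * (2*(d:ℝ)*a^2 + 2*(d:ℝ)*a*C₀)
      + (2*(d:ℝ)) * ((d:ℝ)*a^2 + 2*a + 2*(d:ℝ)*C₀)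
      + ((d:ℝ)*a*C₀ + 4*(d:ℝ)*C₀ + 2*a) with hC1def
  refine ⟨Real.sqrt d * |C1| + 1, by positivity, ?_⟩
  intro lam hlam p g hp hpb hgsm hHJ hgval hgrad hgrad2 hglap x hx1
  have hB0 : (0:ℝ) < ‖x‖ := lt_of_lt_of_le one_pos hx1
  have hxne : x ≠ 0 := by
    intro h; rw [h, norm_zero] at hx1; linarith
  set r3 : ℝ := ‖x‖ ^ (-(3 + δ)) with hr3def
  set r4 : ℝ := ‖x‖ ^ (-(4 + δ)) with hr4def
  set r5 : ℝ := ‖x‖ ^ (-(5 + δ)) with hr5def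
  have hr3pos : 0 < r3 := Real.rpow_pos_of_pos hB0 _
  have hr4pos : 0 < r4 := Real.rpow_pos_of_pos hB0 _
  have hBr3 : ‖x‖ * r3 ≤ 1 := by
    have h := pow_mul_rpow_le hx1 1 (-(3 + δ)) 0 (by push_cast; linarith)
    simpa only [pow_one, Real.rpow_zero] using h
  have hB2r4 : ‖x‖ ^ 2 * r4 ≤ 1 := by
    have h := pow_mul_rpow_le hx1 2 (-(4 + δ)) 0 (by push_cast; linarith)
    simpa only [Real.rpow_zero] using h
  have hBr4 : ‖x‖ * r4 ≤ r3 := by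
    have h := pow_mul_rpow_le hx1 1 (-(4 + δ)) (-(3 + δ)) (by push_cast; linarith)
    simpa only [pow_one] using h
  have hB2r5 : ‖x‖ ^ 2 * r5 ≤ r3 := by
    exact pow_mul_rpow_le hx1 2 (-(5 + δ)) (-(3 + δ)) (by push_cast; linarith)
  -- cast facts
  have hd3 : (3:ℝ) ≤ (d:ℝ) := by exact_mod_cast hd
  have hd0 : (0:ℝ) ≤ (d:ℝ) := by linarith
  have hC0' : (0:ℝ) ≤ C₀ := hC₀.le
  have ha' : (0:ℝ) ≤ a := ha.le
  have hlamp : (0:ℝ) < lam := lt_of_lt_of_le hlam0 hlam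
  have hCla : C₀ / lam ≤ a := by rw [ha_def]; gcongr
  -- component bounds
  have hg1 : ∀ i, |pd g i x| ≤ a * r3 := fun i =>
    (hgrad x hx1 i).trans (mul_le_mul_of_nonneg_right hCla hr3pos.le)
  have hg2 : ∀ i j, |pd2 g i j x| ≤ C₀ * r4 := fun i j => hgrad2 x hx1 i j
  have hpdLb : ∀ j, |pd (fun y => lapl g y) j x| ≤ a * r5 := fun j =>
    (hglap x hx1 j).trans (mul_le_mul_of_nonneg_right hCla (Real.rpow_pos_of_pos hB0 _).le)
  have hgb : |g x| ≤ 2 := by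
    rcases hgval x hxne with ⟨h1, h2⟩
    rw [abs_le]; constructor <;> linarith
  have hxc : ∀ i, |x i| ≤ ‖x‖ := abs_coord_le_norm x
  have hnsqabs : |‖x‖ ^ 2| ≤ ‖x‖ ^ 2 := le_of_eq (abs_of_nonneg (by positivity))
  have hG2b : |gradSq g x| ≤ (d:ℝ) * (a * r3) ^ 2 := by
    have h1 : |gradSq g x| ≤ ∑ i : Fin d, |(pd g i x) ^ 2| :=
      Finset.abs_sum_le_sum_abs _ _
    have h2 : ∀ i : Fin d, |(pd g i x) ^ 2| ≤ (a * r3) ^ 2 := fun i => by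
      rw [abs_pow, sq_abs, ← sq_abs]
      exact pow_le_pow_left₀ (abs_nonneg _) (hg1 i) 2
    calc |gradSq g x| ≤ ∑ _i : Fin d, (a * r3) ^ 2 :=
          h1.trans (Finset.sum_le_sum fun i _ => h2 i)
    _ = (d:ℝ) * (a * r3) ^ 2 := by
        simp [Finset.sum_const, Finset.card_univ]
  have hXDb : |xDot g x| ≤ (d:ℝ) * (‖x‖ * (a * r3)) := by
    calc |xDot g x| ≤ ∑ i : Fin d, |x i * pd g i x| := Finset.abs_sum_le_sum_abs _ _
    _ ≤ ∑ _i : Fin d, ‖x‖ * (a * r3) :=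
        Finset.sum_le_sum fun i _ => mul_abs_le (hxc i) (hg1 i)
    _ = (d:ℝ) * (‖x‖ * (a * r3)) := by simp [Finset.sum_const, Finset.card_univ]
  have hLb : |lapl g x| ≤ (d:ℝ) * (C₀ * r4) := by
    calc |lapl g x| ≤ ∑ i : Fin d, |pd2 g i i x| := Finset.abs_sum_le_sum_abs _ _
    _ ≤ ∑ _i : Fin d, C₀ * r4 := Finset.sum_le_sum fun i _ => hg2 i i
    _ = (d:ℝ) * (C₀ * r4) := by simp [Finset.sum_const, Finset.card_univ]
  have hS1b : ∀ j, |∑ i, 2 * pd g i x * pd2 g j i x| ≤ (d:ℝ) * (2 * (a * r3) * (C₀ * r4)) := by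
    intro j
    calc |∑ i, 2 * pd g i x * pd2 g j i x| ≤ ∑ i : Fin d, |2 * pd g i x * pd2 g j i x| :=
        Finset.abs_sum_le_sum_abs _ _
    _ ≤ ∑ _i : Fin d, 2 * (a * r3) * (C₀ * r4) :=
        Finset.sum_le_sum fun i _ => mul_abs_le (mul_abs_le abs_two.le (hg1 i)) (hg2 j i)
    _ = (d:ℝ) * (2 * (a * r3) * (C₀ * r4)) := by simp [Finset.sum_const, Finset.card_univ]
  have hS2b : ∀ j, |∑ i, x i * pd2 g j i x| ≤ (d:ℝ) * (‖x‖ * (C₀ * r4)) := by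
    intro j
    calc |∑ i, x i * pd2 g j i x| ≤ ∑ i : Fin d, |x i * pd2 g j i x| :=
        Finset.abs_sum_le_sum_abs _ _
    _ ≤ ∑ _i : Fin d, ‖x‖ * (C₀ * r4) :=
        Finset.sum_le_sum fun i _ => mul_abs_le (hxc i) (hg2 j i)
    _ = (d:ℝ) * (‖x‖ * (C₀ * r4)) := by simp [Finset.sum_const, Finset.card_univ]
  -- nonnegativity of coefficients
  have c1 : (0:ℝ) ≤ 2*(d:ℝ)*a^2 := by positivity
  have c2 : (0:ℝ) ≤ 2*(d:ℝ)*a*C₀ := by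
    have := mul_nonneg (mul_nonneg hd0 ha') hC0'; linarith
  have c3 : (0:ℝ) ≤ (d:ℝ)*a^2 := by positivity
  have c4 : (0:ℝ) ≤ (d:ℝ)*C₀ := mul_nonneg hd0 hC0'
  have c5 : (0:ℝ) ≤ (d:ℝ)*a*C₀ := mul_nonneg (mul_nonneg hd0 ha') hC0'
  -- key per-coordinate bound
  have key : ∀ j : Fin d, |pd (fun y => ∑ i, Fmat g i i y) j x| ≤ C1 * r3 := by
    intro j
    rw [pd_trace g hgsm hxne j]
    have habs1d : |1 - (d:ℝ)| ≤ (d:ℝ) := by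
      rw [abs_of_nonpos (by linarith)]; linarith
    have habs2d : |4 - 2*(d:ℝ)| ≤ 2*(d:ℝ) := by
      rw [abs_of_nonpos (by linarith)]; linarith
    -- u1
    have u1 : |2 * x j * gradSq g x| ≤ 2*(d:ℝ)*a^2 * r3 := by
      calc |2 * x j * gradSq g x| ≤ (2 * ‖x‖) * ((d:ℝ) * (a * r3) ^ 2) :=
          mul_abs_le (mul_abs_le abs_two.le (hxc j)) hG2b
      _ = (2*(d:ℝ)*a^2) * ((‖x‖ * r3) * r3) := by ring
      _ ≤ (2*(d:ℝ)*a^2) * r3 := le_aux c1 hBr3 hr3pos.le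
    have u2 : |‖x‖ ^ 2 * ∑ i, 2 * pd g i x * pd2 g j i x| ≤ 2*(d:ℝ)*a*C₀ * r3 := by
      calc |‖x‖ ^ 2 * ∑ i, 2 * pd g i x * pd2 g j i x|
          ≤ ‖x‖ ^ 2 * ((d:ℝ) * (2 * (a * r3) * (C₀ * r4))) := mul_abs_le hnsqabs (hS1b j)
      _ = (2*(d:ℝ)*a*C₀) * ((‖x‖ ^ 2 * r4) * r3) := by ring
      _ ≤ (2*(d:ℝ)*a*C₀) * r3 := le_aux c2 hB2r4 hr3pos.le
    have u3 : |pd g j x * xDot g x| ≤ (d:ℝ)*a^2 * r3 := by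
      calc |pd g j x * xDot g x| ≤ (a * r3) * ((d:ℝ) * (‖x‖ * (a * r3))) :=
          mul_abs_le (hg1 j) hXDb
      _ = ((d:ℝ)*a^2) * ((‖x‖ * r3) * r3) := by ring
      _ ≤ ((d:ℝ)*a^2) * r3 := le_aux c3 hBr3 hr3pos.le
    have u4 : |g x * (pd g j x + ∑ i, x i * pd2 g j i x)| ≤ (2*a + 2*(d:ℝ)*C₀) * r3 := by
      have habsum : |pd g j x + ∑ i, x i * pd2 g j i x|
          ≤ a * r3 + (d:ℝ) * (‖x‖ * (C₀ * r4)) :=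
        (abs_add_le _ _).trans (add_le_add (hg1 j) (hS2b j))
      have w : (d:ℝ) * (‖x‖ * (C₀ * r4)) ≤ ((d:ℝ)*C₀) * r3 := by
        calc (d:ℝ) * (‖x‖ * (C₀ * r4)) = ((d:ℝ)*C₀) * (‖x‖ * r4) := by ring
        _ ≤ ((d:ℝ)*C₀) * r3 := mul_le_mul_of_nonneg_left hBr4 c4
      calc |g x * (pd g j x + ∑ i, x i * pd2 g j i x)|
          ≤ 2 * (a * r3 + (d:ℝ) * (‖x‖ * (C₀ * r4))) := mul_abs_le hgb habsum
      _ ≤ 2 * (a * r3 + ((d:ℝ)*C₀) * r3) := by linarith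
      _ = (2*a + 2*(d:ℝ)*C₀) * r3 := by ring
    have u5 : |pd g j x * (‖x‖ ^ 2 * lapl g x)| ≤ (d:ℝ)*a*C₀ * r3 := by
      calc |pd g j x * (‖x‖ ^ 2 * lapl g x)|
          ≤ (a * r3) * (‖x‖ ^ 2 * ((d:ℝ) * (C₀ * r4))) :=
          mul_abs_le (hg1 j) (mul_abs_le hnsqabs hLb)
      _ = ((d:ℝ)*a*C₀) * ((‖x‖ ^ 2 * r4) * r3) := by ring
      _ ≤ ((d:ℝ)*a*C₀) * r3 := le_aux c5 hB2r4 hr3pos.le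
    have u6 : |g x * (2 * x j * lapl g x + ‖x‖ ^ 2 * pd (fun y => lapl g y) j x)|
        ≤ (4*(d:ℝ)*C₀ + 2*a) * r3 := by
      have w1 : |2 * x j * lapl g x| ≤ (2*(d:ℝ)*C₀) * (‖x‖ * r4) := by
        calc |2 * x j * lapl g x| ≤ (2 * ‖x‖) * ((d:ℝ) * (C₀ * r4)) :=
            mul_abs_le (mul_abs_le abs_two.le (hxc j)) hLb
        _ = (2*(d:ℝ)*C₀) * (‖x‖ * r4) := by ring
      have w1' : (2*(d:ℝ)*C₀) * (‖x‖ * r4) ≤ (2*(d:ℝ)*C₀) * r3 :=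
        mul_le_mul_of_nonneg_left hBr4 (by linarith)
      have w2 : |‖x‖ ^ 2 * pd (fun y => lapl g y) j x| ≤ a * (‖x‖ ^ 2 * r5) := by
        calc |‖x‖ ^ 2 * pd (fun y => lapl g y) j x| ≤ ‖x‖ ^ 2 * (a * r5) :=
            mul_abs_le hnsqabs (hpdLb j)
        _ = a * (‖x‖ ^ 2 * r5) := by ring
      have w2' : a * (‖x‖ ^ 2 * r5) ≤ a * r3 := mul_le_mul_of_nonneg_left hB2r5 ha'
      have habsum : |2 * x j * lapl g x + ‖x‖ ^ 2 * pd (fun y => lapl g y) j x|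
          ≤ (2*(d:ℝ)*C₀) * r3 + a * r3 :=
        (abs_add_le _ _).trans (by linarith [w1.trans w1', w2.trans w2'])
      calc |g x * (2 * x j * lapl g x + ‖x‖ ^ 2 * pd (fun y => lapl g y) j x)|
          ≤ 2 * ((2*(d:ℝ)*C₀) * r3 + a * r3) := mul_abs_le hgb habsum
      _ = (4*(d:ℝ)*C₀ + 2*a) * r3 := by ring
    have bA1 : |2 * x j * gradSq g x + ‖x‖ ^ 2 * ∑ i, 2 * pd g i x * pd2 g j i x|
        ≤ (2*(d:ℝ)*a^2 + 2*(d:ℝ)*a*C₀) * r3 :=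
      (abs_add_le _ _).trans (by linarith)
    have bA2 : |pd g j x * xDot g x + g x * (pd g j x + ∑ i, x i * pd2 g j i x)|
        ≤ ((d:ℝ)*a^2 + 2*a + 2*(d:ℝ)*C₀) * r3 :=
      (abs_add_le _ _).trans (by linarith)
    have bZ : |pd g j x * (‖x‖ ^ 2 * lapl g x)
          + g x * (2 * x j * lapl g x + ‖x‖ ^ 2 * pd (fun y => lapl g y) j x)|
        ≤ ((d:ℝ)*a*C₀ + 4*(d:ℝ)*C₀ + 2*a) * r3 :=
      (abs_add_le _ _).trans (by linarith)
    have bX : |(1 - (d:ℝ)) * (2 * x j * gradSq g x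
          + ‖x‖ ^ 2 * ∑ i, 2 * pd g i x * pd2 g j i x)|
        ≤ (d:ℝ) * ((2*(d:ℝ)*a^2 + 2*(d:ℝ)*a*C₀) * r3) := mul_abs_le habs1d bA1
    have bY : |(4 - 2*(d:ℝ)) * (pd g j x * xDot g x
          + g x * (pd g j x + ∑ i, x i * pd2 g j i x))|
        ≤ (2*(d:ℝ)) * (((d:ℝ)*a^2 + 2*a + 2*(d:ℝ)*C₀) * r3) := mul_abs_le habs2d bA2
    calc |((1 - (d:ℝ)) * (2 * x j * gradSq g x
          + ‖x‖ ^ 2 * ∑ i, 2 * pd g i x * pd2 g j i x))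
        + (((4 - 2*(d:ℝ)) * (pd g j x * xDot g x
            + g x * (pd g j x + ∑ i, x i * pd2 g j i x)))
          + (pd g j x * (‖x‖ ^ 2 * lapl g x)
            + g x * (2 * x j * lapl g x + ‖x‖ ^ 2 * pd (fun y => lapl g y) j x)))|
        ≤ (d:ℝ) * ((2*(d:ℝ)*a^2 + 2*(d:ℝ)*a*C₀) * r3)
          + ((2*(d:ℝ)) * (((d:ℝ)*a^2 + 2*a + 2*(d:ℝ)*C₀) * r3)
            + ((d:ℝ)*a*C₀ + 4*(d:ℝ)*C₀ + 2*a) * r3) :=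
        (abs_add_le _ _).trans (add_le_add bX ((abs_add_le _ _).trans (add_le_add bY bZ)))
    _ = C1 * r3 := by rw [hC1def]; ring
  -- conclusion
  have hC1r3 : 0 ≤ C1 * r3 := (abs_nonneg _).trans (key ⟨0, by omega⟩)
  have hfin : ∀ j : Fin d, (pd (fun y => ∑ i, Fmat g i i y) j x) ^ 2 ≤ (C1 * r3) ^ 2 := by
    intro j
    rw [← sq_abs]
    exact pow_le_pow_left₀ (abs_nonneg _) (key j) 2
  calc Real.sqrt (∑ j, (pd (fun y => ∑ i, Fmat g i i y) j x) ^ 2)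
      ≤ Real.sqrt (∑ _j : Fin d, (C1 * r3) ^ 2) :=
        Real.sqrt_le_sqrt (Finset.sum_le_sum fun j _ => hfin j)
  _ = Real.sqrt ((d:ℝ) * (C1 * r3) ^ 2) := by
      rw [Finset.sum_const, Finset.card_univ, Fintype.card_fin, nsmul_eq_mul]
  _ = Real.sqrt d * (C1 * r3) := by
      rw [Real.sqrt_mul (Nat.cast_nonneg d), Real.sqrt_sq hC1r3]
  _ = (Real.sqrt d * C1) * r3 := by ring
  _ ≤ (Real.sqrt d * |C1| + 1) * r3 := by
      have h1 : Real.sqrt d * C1 ≤ Real.sqrt d * |C1| + 1 := by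
        have := mul_le_mul_of_nonneg_left (le_abs_self C1) (Real.sqrt_nonneg (d:ℝ))
        linarith
      exact mul_le_mul_of_nonneg_right h1 hr3pos.le
end
end

section
/- Let d ≥ 3, λ > 0, ε > 0, let p, Q : ℝ^d → ℝ be continuous with p ∈ C¹, and let u ∈ C²(ℝ^d, ℂ) satisfy Δu + p u + Q u + λ u + iε u = f pointwise on ℝ^d, for some continuous f : ℝ^d → ℂ. Then for every real-valued ψ ∈ C_c^∞(ℝ^d): Re ∫ ∇u · (D²ψ · ∇ū) dx + (1/2) Re ∫ (∇(Δψ) · ∇u) ū dx + (1/2) ∫ (∇ψ · ∇p) |u|² dx + ε Im ∫ (∇ψ · ∇ū) u dx − Re ∫ Q (∇ψ · ∇ū) u dx − (1/2) ∫ Q (Δψ) |u|² dx = − Re ∫ f (∇ψ · ∇ū) dx − (1/2) Re ∫ f (Δψ) ū dx. -/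
/- STATEMENT 9: Morrey–Campanato / multiplier identity with a weight ψ for
   solutions of the modified Helmholtz equation Δu + pu + Qu + λu + iεu = f. -/

noncomputable section
open MeasureTheory Complex

/-- The `i`-th partial derivative of a complex-valued function. -/
def pdC {d : ℕ} (f : Euc d → ℂ) (i : Fin d) (x : Euc d) : ℂ :=
  fderiv ℝ f x (EuclideanSpace.single i 1)

/-- The Laplacian of a complex-valued function. -/
def laplC {d : ℕ} (f : Euc d → ℂ) (x : Euc d) : ℂ :=
  ∑ i, pdC (fun y => pdC f i y) i x

variable {d : ℕ}

lemma contDiff_fderiv_apply {F : Type*} [NormedAddCommGroup F] [NormedSpace ℝ F]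
    {g : Euc d → F} {n m : WithTop ℕ∞} (hg : ContDiff ℝ n g) (h : m + 1 ≤ n) (w : Euc d) :
    ContDiff ℝ m fun x => fderiv ℝ g x w :=
  (ContinuousLinearMap.apply ℝ F w).contDiff.comp (hg.fderiv_right h)

lemma fderiv_conj_apply {g : Euc d → ℂ} {x : Euc d} (hg : DifferentiableAt ℝ g x) (w : Euc d) :
    fderiv ℝ (fun y => (starRingEnd ℂ) (g y)) x w = (starRingEnd ℂ) (fderiv ℝ g x w) := by
  have h := (Complex.conjCLE.toContinuousLinearMap.hasFDerivAt.comp x hg.hasFDerivAt).fderiv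
  have : (fun y => Complex.conjCLE.toContinuousLinearMap (g y)) = fun y => (starRingEnd ℂ) (g y) := rfl
  rw [← this]
  show fderiv ℝ (Complex.conjCLE.toContinuousLinearMap ∘ g) x w = _
  rw [h]; rfl

lemma fderiv_ofReal_apply {g : Euc d → ℝ} {x : Euc d} (hg : DifferentiableAt ℝ g x) (w : Euc d) :
    fderiv ℝ (fun y => ((g y : ℝ) : ℂ)) x w = ((fderiv ℝ g x w : ℝ) : ℂ) := by
  have h := (Complex.ofRealCLM.hasFDerivAt.comp x hg.hasFDerivAt).fderiv
  show fderiv ℝ (Complex.ofRealCLM ∘ g) x w = _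
  rw [h]; rfl

lemma differentiable_conj {g : Euc d → ℂ} (hg : Differentiable ℝ g) :
    Differentiable ℝ (fun y => (starRingEnd ℂ) (g y)) :=
  fun x => (Complex.conjCLE.differentiable.differentiableAt).comp x (hg x)

lemma differentiable_ofReal {g : Euc d → ℝ} (hg : Differentiable ℝ g) :
    Differentiable ℝ (fun y => ((g y : ℝ) : ℂ)) :=
  fun x => (Complex.ofRealCLM.differentiable.differentiableAt).comp x (hg x)

lemma fderiv_norm_sq_comp_apply {g : Euc d → ℂ} {x : Euc d} (hg : DifferentiableAt ℝ g x) (w : Euc d) :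
    fderiv ℝ (fun y => ‖g y‖ ^ 2) x w
      = 2 * ((starRingEnd ℂ) (g x) * fderiv ℝ g x w).re := by
  have h1 : (fun y => ‖g y‖ ^ 2) = fun y => ((starRingEnd ℂ) (g y) * g y).re := by
    funext y
    simp [Complex.mul_re, Complex.sq_norm, Complex.normSq_apply]
  have hc : DifferentiableAt ℝ (fun y => (starRingEnd ℂ) (g y)) x :=
    (Complex.conjCLE.differentiable.differentiableAt).comp x hg
  have hmul : DifferentiableAt ℝ (fun y => (starRingEnd ℂ) (g y) * g y) x := hc.mul hg
  have h2 := (Complex.reCLM.hasFDerivAt.comp x hmul.hasFDerivAt).fderiv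
  rw [h1]
  show fderiv ℝ (Complex.reCLM ∘ fun y => (starRingEnd ℂ) (g y) * g y) x w = _
  rw [h2]
  simp only [ContinuousLinearMap.coe_comp', Function.comp_apply]
  rw [fderiv_fun_mul hc hg]
  simp only [ContinuousLinearMap.add_apply, ContinuousLinearMap.smul_apply, smul_eq_mul]
  rw [fderiv_conj_apply hg]
  simp [Complex.mul_re, Complex.conj_re, Complex.conj_im]
  ring

lemma fderiv_zero_of_zero_on_open {F : Type*} [NormedAddCommGroup F] [NormedSpace ℝ F]
    {U : Set (Euc d)} (hU : IsOpen U) {g : Euc d → F} (hg : ∀ y ∈ U, g y = 0)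
    {x : Euc d} (hx : x ∈ U) (w : Euc d) : fderiv ℝ g x w = 0 := by
  have h : g =ᶠ[nhds x] (fun _ => (0 : F)) :=
    Filter.eventuallyEq_of_mem (hU.mem_nhds hx) hg
  rw [h.fderiv_eq, fderiv_fun_const]
  rfl

lemma pdC_symm {u : Euc d → ℂ} (hu : ContDiff ℝ 2 u) (i j : Fin d) (x : Euc d) :
    pdC (fun y => pdC u j y) i x = pdC (fun y => pdC u i y) j x := by
  have hu1 : Differentiable ℝ u := hu.differentiable (by norm_num)
  have hfd : ContDiff ℝ 1 (fderiv ℝ u) := hu.fderiv_right (le_refl _)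
  have key : ∀ w v : Euc d, fderiv ℝ (fun y => fderiv ℝ u y w) x v
      = fderiv ℝ (fderiv ℝ u) x v w := by
    intro w v
    have h1 : HasFDerivAt (fderiv ℝ u) (fderiv ℝ (fderiv ℝ u) x) x :=
      (hfd.differentiable one_ne_zero x).hasFDerivAt
    have h2 : HasFDerivAt (fun y => fderiv ℝ u y w)
        ((ContinuousLinearMap.apply ℝ ℂ w).comp (fderiv ℝ (fderiv ℝ u) x)) x :=
      (ContinuousLinearMap.apply ℝ ℂ w).hasFDerivAt.comp x h1
    rw [h2.fderiv]; rfl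
  have hsymm := second_derivative_symmetric (f := u) (f' := fderiv ℝ u)
      (f'' := fderiv ℝ (fderiv ℝ u) x) (fun y => (hu1 y).hasFDerivAt)
      ((hfd.differentiable one_ne_zero x).hasFDerivAt)
  show fderiv ℝ (fun y => fderiv ℝ u y (EuclideanSpace.single j 1)) x (EuclideanSpace.single i 1)
    = fderiv ℝ (fun y => fderiv ℝ u y (EuclideanSpace.single i 1)) x (EuclideanSpace.single j 1)
  rw [key, key, hsymm]

lemma differentiable_norm_sq {g : Euc d → ℂ} (hg : Differentiable ℝ g) :
    Differentiable ℝ (fun y => ‖g y‖ ^ 2) := by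
  have h1 : (fun y => ‖g y‖ ^ 2) = fun y => ((starRingEnd ℂ) (g y) * g y).re := by
    funext y
    simp [Complex.mul_re, Complex.sq_norm, Complex.normSq_apply]
  rw [h1]
  exact Complex.reCLM.differentiable.comp ((differentiable_conj hg).mul hg)

lemma ibp_wrap {𝕜 : Type*} [RCLike 𝕜] {F G F' G' : Euc d → 𝕜} (i : Fin d)
    (hF : Differentiable ℝ F) (hG : Differentiable ℝ G)
    (hF' : ∀ x, fderiv ℝ F x (EuclideanSpace.single i 1) = F' x)
    (hG' : ∀ x, fderiv ℝ G x (EuclideanSpace.single i 1) = G' x)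
    (h1 : Integrable (fun x => F' x * G x)) (h2 : Integrable (fun x => F x * G' x))
    (h3 : Integrable (fun x => F x * G x)) :
    ∫ x, F x * G' x = - ∫ x, F' x * G x := by
  have h := integral_mul_fderiv_eq_neg_fderiv_mul_of_integrable (μ := volume)
    (v := EuclideanSpace.single i 1) (f := F) (g := G) ?_ ?_ h3 (fun x _ => hF x) (fun x _ => hG x)
  · simpa only [hF', hG'] using h
  · simpa only [hF'] using h1
  · simpa only [hG'] using h2

theorem helmholtz_weighted_multiplier_identity
    {d : ℕ} (hd : 3 ≤ d) (lam eps : ℝ) (hlam : 0 < lam) (heps : 0 < eps)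
    (p Q : Euc d → ℝ) (hp : Continuous p) (hp1 : ContDiff ℝ 1 p) (hQ : Continuous Q)
    (f : Euc d → ℂ) (hf : Continuous f)
    (u : Euc d → ℂ) (hu : ContDiff ℝ 2 u)
    (hueq : ∀ x, laplC u x + p x * u x + Q x * u x + lam * u x + I * eps * u x = f x)
    (ψ : Euc d → ℝ) (hψ : ContDiff ℝ (⊤ : ℕ∞) ψ) (hψc : HasCompactSupport ψ) :
    -- Re ∫ ∇u · (D²ψ · ∇ū)
    (∫ x, ∑ i, ∑ j, (pd2 ψ i j x : ℂ) * pdC u i x * (starRingEnd ℂ) (pdC u j x)).re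
      -- + (1/2) Re ∫ (∇(Δψ) · ∇u) ū
      + (1 / 2) * (∫ x, (∑ i, (pd (fun y => lapl ψ y) i x : ℂ) * pdC u i x)
          * (starRingEnd ℂ) (u x)).re
      -- + (1/2) ∫ (∇ψ · ∇p) |u|²
      + (1 / 2) * (∫ x, (∑ i, pd ψ i x * pd p i x) * ‖u x‖ ^ 2)
      -- + ε Im ∫ (∇ψ · ∇ū) u
      + eps * (∫ x, (∑ i, (pd ψ i x : ℂ) * (starRingEnd ℂ) (pdC u i x)) * u x).im
      -- − Re ∫ Q (∇ψ · ∇ū) u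
      - (∫ x, (Q x : ℂ) * (∑ i, (pd ψ i x : ℂ) * (starRingEnd ℂ) (pdC u i x)) * u x).re
      -- − (1/2) ∫ Q (Δψ) |u|²
      - (1 / 2) * (∫ x, Q x * lapl ψ x * ‖u x‖ ^ 2)
    = -- − Re ∫ f (∇ψ · ∇ū)
      -(∫ x, f x * ∑ i, (pd ψ i x : ℂ) * (starRingEnd ℂ) (pdC u i x)).re
      -- − (1/2) Re ∫ f (Δψ) ū
      - (1 / 2) * (∫ x, f x * (lapl ψ x : ℂ) * (starRingEnd ℂ) (u x)).re := by
  classical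
  -- regularity of u
  have hu1 : Differentiable ℝ u := hu.differentiable two_ne_zero
  have huc : Continuous u := hu1.continuous
  have hV1 : ∀ i : Fin d, ContDiff ℝ 1 fun x => pdC u i x := fun i =>
    contDiff_fderiv_apply hu (by norm_num) _
  have hVd : ∀ i, Differentiable ℝ fun x => pdC u i x := fun i => (hV1 i).differentiable one_ne_zero
  have hVc : ∀ i, Continuous fun x => pdC u i x := fun i => (hVd i).continuous
  have hWc : ∀ i j, Continuous fun x => pdC (fun y => pdC u j y) i x := fun i j =>
    (contDiff_fderiv_apply (m := 0) (hV1 j) (by norm_num) _).continuous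
  -- regularity of ψ derivatives
  have hψ1 : ∀ i, ContDiff ℝ (⊤ : ℕ∞) fun x => pd ψ i x := fun i =>
    contDiff_fderiv_apply hψ (by simp) _
  have hψ1c : ∀ i, Continuous fun x => pd ψ i x := fun i => (hψ1 i).continuous
  have hψ1d : ∀ i, Differentiable ℝ fun x => pd ψ i x := fun i => (hψ1 i).differentiable (by simp)
  have hψ2 : ∀ i j, ContDiff ℝ (⊤ : ℕ∞) fun x => pd2 ψ i j x := fun i j =>
    contDiff_fderiv_apply (hψ1 j) (by simp) _
  have hψ2c : ∀ i j, Continuous fun x => pd2 ψ i j x := fun i j => (hψ2 i j).continuous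
  have hL : ContDiff ℝ (⊤ : ℕ∞) fun x => lapl ψ x := ContDiff.sum fun i _ => hψ2 i i
  have hLc : Continuous fun x => lapl ψ x := hL.continuous
  have hLd : Differentiable ℝ fun x => lapl ψ x := hL.differentiable (by simp)
  have hψ3c : ∀ i, Continuous fun x => pd (fun y => lapl ψ y) i x := fun i =>
    (contDiff_fderiv_apply (m := (⊤ : ℕ∞)) hL (by simp) _).continuous
  -- p
  have hpd : Differentiable ℝ p := hp1.differentiable one_ne_zero
  have hpdc : ∀ i, Continuous fun x => pd p i x := fun i =>
    (contDiff_fderiv_apply (m := 0) hp1 (by norm_num) _).continuous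
  -- vanishing of ψ-derivatives outside tsupport ψ
  have hUo : IsOpen (tsupport ψ)ᶜ := (isClosed_tsupport ψ).isOpen_compl
  have hz1 : ∀ i, ∀ x ∉ tsupport ψ, pd ψ i x = 0 := fun i x hx =>
    fderiv_zero_of_zero_on_open hUo (fun y hy => image_eq_zero_of_notMem_tsupport hy) hx _
  have hz2 : ∀ i j, ∀ x ∉ tsupport ψ, pd2 ψ i j x = 0 := fun i j x hx =>
    fderiv_zero_of_zero_on_open hUo (fun y hy => hz1 j y hy) hx _
  have hzL : ∀ x ∉ tsupport ψ, lapl ψ x = 0 := fun x hx =>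
    Finset.sum_eq_zero fun i _ => hz2 i i x hx
  have hz3 : ∀ i, ∀ x ∉ tsupport ψ, pd (fun y => lapl ψ y) i x = 0 := fun i x hx =>
    fderiv_zero_of_zero_on_open hUo (fun y hy => hzL y hy) hx _
  -- integrability helpers
  have intC : ∀ (g : Euc d → ℂ), Continuous g → (∀ x ∉ tsupport ψ, g x = 0) →
      Integrable g volume := fun g hg h0 =>
    hg.integrable_of_hasCompactSupport (HasCompactSupport.intro hψc h0)
  have intR : ∀ (g : Euc d → ℝ), Continuous g → (∀ x ∉ tsupport ψ, g x = 0) →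
      Integrable g volume := fun g hg h0 =>
    hg.integrable_of_hasCompactSupport (HasCompactSupport.intro hψc h0)
  -- the multiplier A = ∇ψ·∇ū
  have hA_cont : Continuous fun x => ∑ j, (pd ψ j x : ℂ) * (starRingEnd ℂ) (pdC u j x) := by
    apply continuous_finset_sum
    intro j _
    exact (Complex.continuous_ofReal.comp (hψ1c j)).mul ((hVc j).star)
  have hA0 : ∀ x ∉ tsupport ψ,
      (∑ j, (pd ψ j x : ℂ) * (starRingEnd ℂ) (pdC u j x)) = 0 := by
    intro x hx
    exact Finset.sum_eq_zero fun j _ => by rw [hz1 j x hx]; simp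
  have hpC : Continuous fun x => ((p x : ℝ) : ℂ) := Complex.continuous_ofReal.comp hp
  have hQC : Continuous fun x => ((Q x : ℝ) : ℂ) := Complex.continuous_ofReal.comp hQ
  have P4 : (∫ x, (∑ i, pdC (fun y => pdC u i y) i x)
        * (∑ j, (pd ψ j x : ℂ) * (starRingEnd ℂ) (pdC u j x))).re
      = (∫ x, f x * ∑ i, (pd ψ i x : ℂ) * (starRingEnd ℂ) (pdC u i x)).re
        - (∫ x, ((p x : ℂ) + lam) * u x
            * (∑ j, (pd ψ j x : ℂ) * (starRingEnd ℂ) (pdC u j x))).re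
        - (∫ x, (Q x : ℂ) * (∑ i, (pd ψ i x : ℂ) * (starRingEnd ℂ) (pdC u i x)) * u x).re
        + eps * (∫ x, (∑ i, (pd ψ i x : ℂ) * (starRingEnd ℂ) (pdC u i x)) * u x).im := by
    have hptw : ∀ x, (∑ i, pdC (fun y => pdC u i y) i x)
        * (∑ j, (pd ψ j x : ℂ) * (starRingEnd ℂ) (pdC u j x))
        = f x * (∑ j, (pd ψ j x : ℂ) * (starRingEnd ℂ) (pdC u j x))
          - (((p x : ℂ) + lam) * u x) * (∑ j, (pd ψ j x : ℂ) * (starRingEnd ℂ) (pdC u j x))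
          - ((Q x : ℂ) * u x) * (∑ j, (pd ψ j x : ℂ) * (starRingEnd ℂ) (pdC u j x))
          - (I * eps) • (u x * (∑ j, (pd ψ j x : ℂ) * (starRingEnd ℂ) (pdC u j x))) := by
      intro x
      have h := hueq x
      show laplC u x * _ = _
      rw [smul_eq_mul]
      linear_combination (∑ j, (pd ψ j x : ℂ) * (starRingEnd ℂ) (pdC u j x)) * h
    have i1 : Integrable (fun x => f x
        * (∑ j, (pd ψ j x : ℂ) * (starRingEnd ℂ) (pdC u j x))) volume := by
      apply intC _ (hf.mul hA_cont)
      intro x hx; simp only [Pi.mul_apply, Pi.add_apply, Function.comp_apply]; rw [hA0 x hx, mul_zero]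
    have i2 : Integrable (fun x => (((p x : ℂ) + lam) * u x)
        * (∑ j, (pd ψ j x : ℂ) * (starRingEnd ℂ) (pdC u j x))) volume := by
      apply intC _ (((hpC.add continuous_const).mul huc).mul hA_cont)
      intro x hx; simp only [Pi.mul_apply, Pi.add_apply, Function.comp_apply]; rw [hA0 x hx, mul_zero]
    have i3 : Integrable (fun x => ((Q x : ℂ) * u x)
        * (∑ j, (pd ψ j x : ℂ) * (starRingEnd ℂ) (pdC u j x))) volume := by
      apply intC _ ((hQC.mul huc).mul hA_cont)
      intro x hx; simp only [Pi.mul_apply, Pi.add_apply, Function.comp_apply]; rw [hA0 x hx, mul_zero]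
    have i4 : Integrable (fun x => (I * (eps : ℂ)) • (u x
        * (∑ j, (pd ψ j x : ℂ) * (starRingEnd ℂ) (pdC u j x)))) volume := by
      apply intC _ (continuous_const.mul (huc.mul hA_cont))
      intro x hx; simp only [Pi.mul_apply, Pi.add_apply, Function.comp_apply]; rw [hA0 x hx]; simp
    have hsplit : (∫ x, (∑ i, pdC (fun y => pdC u i y) i x)
        * (∑ j, (pd ψ j x : ℂ) * (starRingEnd ℂ) (pdC u j x)))
        = (∫ x, f x * (∑ j, (pd ψ j x : ℂ) * (starRingEnd ℂ) (pdC u j x)))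
          - (∫ x, (((p x : ℂ) + lam) * u x)
              * (∑ j, (pd ψ j x : ℂ) * (starRingEnd ℂ) (pdC u j x)))
          - (∫ x, ((Q x : ℂ) * u x) * (∑ j, (pd ψ j x : ℂ) * (starRingEnd ℂ) (pdC u j x)))
          - (I * (eps : ℂ)) • (∫ x, u x * (∑ j, (pd ψ j x : ℂ) * (starRingEnd ℂ) (pdC u j x))) := by
      rw [← integral_smul]
      have i12 : Integrable (fun x => f x * (∑ j, (pd ψ j x : ℂ) * (starRingEnd ℂ) (pdC u j x))
          - (((p x : ℂ) + lam) * u x) * (∑ j, (pd ψ j x : ℂ) * (starRingEnd ℂ) (pdC u j x)))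
          volume := i1.sub i2
      have i123 : Integrable (fun x => (f x * (∑ j, (pd ψ j x : ℂ) * (starRingEnd ℂ) (pdC u j x))
          - (((p x : ℂ) + lam) * u x) * (∑ j, (pd ψ j x : ℂ) * (starRingEnd ℂ) (pdC u j x)))
          - ((Q x : ℂ) * u x) * (∑ j, (pd ψ j x : ℂ) * (starRingEnd ℂ) (pdC u j x)))
          volume := i12.sub i3
      rw [← integral_sub i1 i2, ← integral_sub i12 i3, ← integral_sub i123 i4]
      exact integral_congr_ae (Filter.Eventually.of_forall hptw)
    rw [hsplit]
    simp only [Complex.sub_re]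
    have e3 : (∫ x, ((Q x : ℂ) * u x) * (∑ j, (pd ψ j x : ℂ) * (starRingEnd ℂ) (pdC u j x)))
        = ∫ x, (Q x : ℂ) * (∑ i, (pd ψ i x : ℂ) * (starRingEnd ℂ) (pdC u i x)) * u x := by
      congr 1; funext x; ring
    have e2 : (∫ x, ((p x : ℂ) + lam) * u x
          * (∑ j, (pd ψ j x : ℂ) * (starRingEnd ℂ) (pdC u j x)))
        = ∫ x, (((p x : ℂ) + lam) * u x) * (∑ j, (pd ψ j x : ℂ) * (starRingEnd ℂ) (pdC u j x)) := by
      congr 1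
    have e4 : (∫ x, u x * (∑ j, (pd ψ j x : ℂ) * (starRingEnd ℂ) (pdC u j x)))
        = ∫ x, (∑ i, (pd ψ i x : ℂ) * (starRingEnd ℂ) (pdC u i x)) * u x := by
      congr 1; funext x; ring
    rw [e3, e2, e4]
    have : ((I * (eps : ℂ)) • (∫ x, (∑ i, (pd ψ i x : ℂ) * (starRingEnd ℂ) (pdC u i x)) * u x)).re
        = -(eps * (∫ x, (∑ i, (pd ψ i x : ℂ) * (starRingEnd ℂ) (pdC u i x)) * u x).im) := by
      rw [smul_eq_mul]
      simp [Complex.mul_re]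
    rw [this]
    ring
  -- |u|^2 regularity
  have hu1' : ContDiff ℝ 1 u := hu.of_le one_le_two
  have hconj1 : ContDiff ℝ 1 fun x => (starRingEnd ℂ) (u x) :=
    (Complex.conjCLE.toContinuousLinearMap.contDiff).comp hu1'
  have hm1 : ContDiff ℝ 1 fun x => ‖u x‖ ^ 2 := by
    have h1 : (fun y : Euc d => ‖u y‖ ^ 2) = fun y => ((starRingEnd ℂ) (u y) * u y).re := by
      funext y
      simp [Complex.mul_re, Complex.sq_norm, Complex.normSq_apply]
    rw [h1]
    exact (Complex.reCLM.contDiff).comp (hconj1.mul hu1')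
  have hmd : Differentiable ℝ fun x => ‖u x‖ ^ 2 := hm1.differentiable one_ne_zero
  have hmc : Continuous fun x => ‖u x‖ ^ 2 := hmd.continuous
  have hDm_c : ∀ j : Fin d, Continuous fun x => fderiv ℝ (fun y => ‖u y‖ ^ 2) x
      (EuclideanSpace.single j 1) := fun j =>
    (contDiff_fderiv_apply (m := 0) hm1 (by norm_num) _).continuous
  have P3 : (∫ x, ((p x : ℂ) + lam) * u x
        * (∑ j, (pd ψ j x : ℂ) * (starRingEnd ℂ) (pdC u j x))).re
      = -(1/2) * (∫ x, (∑ i, pd ψ i x * pd p i x) * ‖u x‖ ^ 2)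
        - (1/2) * (∫ x, (p x + lam) * lapl ψ x * ‖u x‖ ^ 2) := by
    have i2 : Integrable (fun x => ((p x : ℂ) + lam) * u x
        * (∑ j, (pd ψ j x : ℂ) * (starRingEnd ℂ) (pdC u j x))) volume := by
      apply intC _ (((hpC.add continuous_const).mul huc).mul hA_cont)
      intro x hx; simp only [Pi.mul_apply, Pi.add_apply, Function.comp_apply]; rw [hA0 x hx, mul_zero]
    -- exchange re and integral
    have hre : (∫ x, ((p x : ℂ) + lam) * u x
          * (∑ j, (pd ψ j x : ℂ) * (starRingEnd ℂ) (pdC u j x))).re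
        = ∫ x, (((p x : ℂ) + lam) * u x
          * (∑ j, (pd ψ j x : ℂ) * (starRingEnd ℂ) (pdC u j x))).re := (integral_re i2).symm
    rw [hre]
    -- pointwise computation
    have hptw : ∀ x, (((p x : ℂ) + lam) * u x
          * (∑ j, (pd ψ j x : ℂ) * (starRingEnd ℂ) (pdC u j x))).re
        = ∑ j, ((p x + lam) * pd ψ j x)
            * ((1/2) * fderiv ℝ (fun y => ‖u y‖ ^ 2) x (EuclideanSpace.single j 1)) := by
      intro x
      rw [Finset.mul_sum, Complex.re_sum]
      apply Finset.sum_congr rfl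
      intro j _
      rw [fderiv_norm_sq_comp_apply (hu1 x),
        show fderiv ℝ u x (EuclideanSpace.single j 1) = pdC u j x from rfl]
      show (((p x : ℂ) + lam) * u x * ((pd ψ j x : ℂ) * (starRingEnd ℂ) (pdC u j x))).re = _
      simp [Complex.mul_re, Complex.mul_im, Complex.conj_re, Complex.conj_im]
      ring
    rw [integral_congr_ae (Filter.Eventually.of_forall hptw)]
    -- swap sum and integral
    have iFj : ∀ j : Fin d, Integrable (fun x => ((p x + lam) * pd ψ j x)
        * ((1/2) * fderiv ℝ (fun y => ‖u y‖ ^ 2) x (EuclideanSpace.single j 1))) volume := by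
      intro j
      apply intR _ (((hp.add continuous_const).mul (hψ1c j)).mul
        (continuous_const.mul (hDm_c j)))
      intro x hx; simp only [Pi.mul_apply, Pi.add_apply, Function.comp_apply]; rw [hz1 j x hx, mul_zero, zero_mul]
    rw [integral_finset_sum _ (fun j _ => iFj j)]
    -- integration by parts in each coordinate
    have hIBP : ∀ j : Fin d, ∫ x, ((p x + lam) * pd ψ j x)
          * (fderiv ℝ (fun y => ‖u y‖ ^ 2) x (EuclideanSpace.single j 1))
        = - ∫ x, (pd p j x * pd ψ j x + (p x + lam) * pd2 ψ j j x) * ‖u x‖ ^ 2 := by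
      intro j
      apply ibp_wrap (𝕜 := ℝ) j (F := fun x => (p x + lam) * pd ψ j x)
        (G := fun x => ‖u x‖ ^ 2)
        (F' := fun x => pd p j x * pd ψ j x + (p x + lam) * pd2 ψ j j x)
        (G' := fun x => fderiv ℝ (fun y => ‖u y‖ ^ 2) x (EuclideanSpace.single j 1))
      · exact (hpd.add_const lam).mul (hψ1d j)
      · exact hmd
      · intro x
        rw [fderiv_fun_mul ((hpd x).add_const lam) (hψ1d j x)]
        simp only [ContinuousLinearMap.add_apply, ContinuousLinearMap.smul_apply, smul_eq_mul]
        rw [fderiv_add_const]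
        show (p x + lam) * pd2 ψ j j x + pd ψ j x * pd p j x = _
        ring
      · intro x; rfl
      · apply intR _ (((hpdc j).mul (hψ1c j)).add
          (((hp.add continuous_const).mul (hψ2c j j))) |>.mul hmc)
        intro x hx; simp only [Pi.mul_apply, Pi.add_apply, Function.comp_apply]; rw [hz1 j x hx, hz2 j j x hx]; ring
      · apply intR _ (((hp.add continuous_const).mul (hψ1c j)).mul (hDm_c j))
        intro x hx; simp only [Pi.mul_apply, Pi.add_apply, Function.comp_apply]; rw [hz1 j x hx]; ring
      · apply intR _ (((hp.add continuous_const).mul (hψ1c j)).mul hmc)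
        intro x hx; simp only [Pi.mul_apply, Pi.add_apply, Function.comp_apply]; rw [hz1 j x hx]; ring
    -- put it together
    have hstep : ∀ j : Fin d, ∫ x, ((p x + lam) * pd ψ j x)
          * ((1/2) * fderiv ℝ (fun y => ‖u y‖ ^ 2) x (EuclideanSpace.single j 1))
        = (1/2) * - ∫ x, (pd p j x * pd ψ j x + (p x + lam) * pd2 ψ j j x) * ‖u x‖ ^ 2 := by
      intro j
      rw [← hIBP j]
      rw [show (fun x => ((p x + lam) * pd ψ j x)
          * ((1/2) * fderiv ℝ (fun y => ‖u y‖ ^ 2) x (EuclideanSpace.single j 1)))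
        = fun x => (1/2 : ℝ) • (((p x + lam) * pd ψ j x)
          * (fderiv ℝ (fun y => ‖u y‖ ^ 2) x (EuclideanSpace.single j 1))) from by
          funext x; simp [smul_eq_mul]; ring]
      rw [integral_smul]
      simp [smul_eq_mul]
    rw [Finset.sum_congr rfl (fun j _ => hstep j)]
    -- final algebra: sum of the two integrals
    have iS1 : ∀ j : Fin d, Integrable
        (fun x => (pd p j x * pd ψ j x + (p x + lam) * pd2 ψ j j x) * ‖u x‖ ^ 2) volume := by
      intro j
      apply intR _ ((((hpdc j).mul (hψ1c j)).add
        (((hp.add continuous_const).mul (hψ2c j j)))).mul hmc)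
      intro x hx; simp only [Pi.mul_apply, Pi.add_apply, Function.comp_apply]; rw [hz1 j x hx, hz2 j j x hx]; ring
    rw [show ∑ j : Fin d, (1/2 : ℝ) * - ∫ x,
          (pd p j x * pd ψ j x + (p x + lam) * pd2 ψ j j x) * ‖u x‖ ^ 2
        = -(1/2) * ∑ j : Fin d, ∫ x,
          (pd p j x * pd ψ j x + (p x + lam) * pd2 ψ j j x) * ‖u x‖ ^ 2 from by
        rw [Finset.mul_sum]; apply Finset.sum_congr rfl; intro j _; ring]
    rw [← integral_finset_sum _ (fun j _ => iS1 j)]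
    have hfin : (∫ x, ∑ j : Fin d,
          (pd p j x * pd ψ j x + (p x + lam) * pd2 ψ j j x) * ‖u x‖ ^ 2)
        = (∫ x, (∑ i, pd ψ i x * pd p i x) * ‖u x‖ ^ 2)
          + (∫ x, (p x + lam) * lapl ψ x * ‖u x‖ ^ 2) := by
      have iA : Integrable (fun x => (∑ i, pd ψ i x * pd p i x) * ‖u x‖ ^ 2) volume := by
        apply intR _ ((continuous_finset_sum _ fun i _ => (hψ1c i).mul (hpdc i)).mul hmc)
        intro x hx; simp only [Pi.mul_apply, Pi.add_apply, Function.comp_apply]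
        rw [Finset.sum_eq_zero fun i _ => by rw [hz1 i x hx, zero_mul], zero_mul]
      have iB : Integrable (fun x => (p x + lam) * lapl ψ x * ‖u x‖ ^ 2) volume := by
        apply intR _ (((hp.add continuous_const).mul hLc).mul hmc)
        intro x hx; simp only [Pi.mul_apply, Pi.add_apply, Function.comp_apply]; rw [hzL x hx]; ring
      rw [← integral_add iA iB]
      apply integral_congr_ae (Filter.Eventually.of_forall ?_)
      intro x
      simp only [lapl, Finset.sum_mul, Finset.mul_sum, ← Finset.sum_add_distrib]
      apply Finset.sum_congr rfl
      intro j _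
      ring
    rw [hfin]
    ring
  have hNc : Continuous fun x => ∑ i, ‖pdC u i x‖ ^ 2 :=
    continuous_finset_sum _ fun i _ => ((hVc i).norm.pow 2)
  have hLC_c : Continuous fun x => ((lapl ψ x : ℝ) : ℂ) := Complex.continuous_ofReal.comp hLc
  have hconjuc : Continuous fun x => (starRingEnd ℂ) (u x) := huc.star
  have hstarV : ∀ i : Fin d, Continuous fun x => (starRingEnd ℂ) (pdC u i x) :=
    fun i => (hVc i).star
  have hψ3C : ∀ i : Fin d, Continuous fun x => ((pd (fun y => lapl ψ y) i x : ℝ) : ℂ) :=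
    fun i => Complex.continuous_ofReal.comp (hψ3c i)
  have P2 : (∫ x, (∑ i, pdC (fun y => pdC u i y) i x)
        * ((lapl ψ x : ℂ) * (starRingEnd ℂ) (u x))).re
      = -(∫ x, (∑ i, (pd (fun y => lapl ψ y) i x : ℂ) * pdC u i x) * (starRingEnd ℂ) (u x)).re
        - ∫ x, lapl ψ x * (∑ i, ‖pdC u i x‖ ^ 2) := by
    -- split the sum
    have isum : ∀ i : Fin d, Integrable (fun x =>
        ((lapl ψ x : ℂ) * (starRingEnd ℂ) (u x)) * pdC (fun y => pdC u i y) i x) volume := by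
      intro i
      apply intC _ ((hLC_c.mul hconjuc).mul (hWc i i))
      intro x hx; simp only [Pi.mul_apply, Pi.add_apply, Function.comp_apply]; rw [hzL x hx]; simp
    have hsplit : (∫ x, (∑ i, pdC (fun y => pdC u i y) i x)
          * ((lapl ψ x : ℂ) * (starRingEnd ℂ) (u x)))
        = ∑ i, ∫ x, ((lapl ψ x : ℂ) * (starRingEnd ℂ) (u x)) * pdC (fun y => pdC u i y) i x := by
      rw [← integral_finset_sum _ (fun i _ => isum i)]
      apply integral_congr_ae (Filter.Eventually.of_forall ?_)
      intro x
      rw [Finset.sum_mul]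
      apply Finset.sum_congr rfl
      intro i _; ring
    rw [hsplit]
    -- integration by parts in each coordinate
    have hIBP : ∀ i : Fin d, ∫ x, ((lapl ψ x : ℂ) * (starRingEnd ℂ) (u x))
          * pdC (fun y => pdC u i y) i x
        = - ∫ x, ((pd (fun y => lapl ψ y) i x : ℂ) * (starRingEnd ℂ) (u x)
            + (lapl ψ x : ℂ) * (starRingEnd ℂ) (pdC u i x)) * pdC u i x := by
      intro i
      apply ibp_wrap (𝕜 := ℂ) i
        (F := fun x => (lapl ψ x : ℂ) * (starRingEnd ℂ) (u x))
        (G := fun x => pdC u i x)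
        (F' := fun x => (pd (fun y => lapl ψ y) i x : ℂ) * (starRingEnd ℂ) (u x)
          + (lapl ψ x : ℂ) * (starRingEnd ℂ) (pdC u i x))
        (G' := fun x => pdC (fun y => pdC u i y) i x)
      · exact (differentiable_ofReal hLd).mul (differentiable_conj hu1)
      · exact hVd i
      · intro x
        rw [fderiv_fun_mul ((differentiable_ofReal hLd) x) ((differentiable_conj hu1) x)]
        simp only [ContinuousLinearMap.add_apply, ContinuousLinearMap.smul_apply, smul_eq_mul]
        rw [fderiv_ofReal_apply (hLd x), fderiv_conj_apply (hu1 x)]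
        show (lapl ψ x : ℂ) * (starRingEnd ℂ) (pdC u i x)
          + (starRingEnd ℂ) (u x) * (pd (fun y => lapl ψ y) i x : ℂ) = _
        ring
      · intro x; rfl
      · apply intC _ ((((hψ3C i).mul hconjuc).add
          (hLC_c.mul (hstarV i))).mul (hVc i))
        intro x hx; simp only [Pi.mul_apply, Pi.add_apply, Function.comp_apply]; rw [hzL x hx, hz3 i x hx]; simp
      · exact isum i
      · apply intC _ ((hLC_c.mul hconjuc).mul (hVc i))
        intro x hx; simp only [Pi.mul_apply, Pi.add_apply, Function.comp_apply]; rw [hzL x hx]; simp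
    rw [Finset.sum_congr rfl (fun i _ => hIBP i)]
    -- split each into the two pieces
    have iP1 : ∀ i : Fin d, Integrable (fun x =>
        (pd (fun y => lapl ψ y) i x : ℂ) * pdC u i x * (starRingEnd ℂ) (u x)) volume := by
      intro i
      apply intC _ (((hψ3C i).mul (hVc i)).mul hconjuc)
      intro x hx; simp only [Pi.mul_apply, Pi.add_apply, Function.comp_apply]; rw [hz3 i x hx]; simp
    have iP2 : ∀ i : Fin d, Integrable (fun x =>
        (lapl ψ x : ℂ) * (starRingEnd ℂ) (pdC u i x) * pdC u i x) volume := by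
      intro i
      apply intC _ ((hLC_c.mul (hstarV i)).mul (hVc i))
      intro x hx; simp only [Pi.mul_apply, Pi.add_apply, Function.comp_apply]; rw [hzL x hx]; simp
    have hsplit2 : ∀ i : Fin d, (∫ x, ((pd (fun y => lapl ψ y) i x : ℂ) * (starRingEnd ℂ) (u x)
          + (lapl ψ x : ℂ) * (starRingEnd ℂ) (pdC u i x)) * pdC u i x)
        = (∫ x, (pd (fun y => lapl ψ y) i x : ℂ) * pdC u i x * (starRingEnd ℂ) (u x))
          + ∫ x, (lapl ψ x : ℂ) * (starRingEnd ℂ) (pdC u i x) * pdC u i x := by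
      intro i
      rw [← integral_add (iP1 i) (iP2 i)]
      apply integral_congr_ae (Filter.Eventually.of_forall ?_)
      intro x; ring
    rw [Finset.sum_congr rfl (fun i _ => by rw [hsplit2 i] :
      ∀ i ∈ Finset.univ, (- ∫ x, ((pd (fun y => lapl ψ y) i x : ℂ) * (starRingEnd ℂ) (u x)
          + (lapl ψ x : ℂ) * (starRingEnd ℂ) (pdC u i x)) * pdC u i x)
        = -((∫ x, (pd (fun y => lapl ψ y) i x : ℂ) * pdC u i x * (starRingEnd ℂ) (u x))
          + ∫ x, (lapl ψ x : ℂ) * (starRingEnd ℂ) (pdC u i x) * pdC u i x))]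
    -- take real parts and identify the two sums
    have eS2 : (∫ x, (∑ i, (pd (fun y => lapl ψ y) i x : ℂ) * pdC u i x) * (starRingEnd ℂ) (u x))
        = ∑ i, ∫ x, (pd (fun y => lapl ψ y) i x : ℂ) * pdC u i x * (starRingEnd ℂ) (u x) := by
      rw [← integral_finset_sum _ (fun i _ => iP1 i)]
      apply integral_congr_ae (Filter.Eventually.of_forall ?_)
      intro x
      rw [Finset.sum_mul]
    have eN : ∀ i : Fin d, (∫ x, (lapl ψ x : ℂ) * (starRingEnd ℂ) (pdC u i x) * pdC u i x).re
        = ∫ x, lapl ψ x * ‖pdC u i x‖ ^ 2 := by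
      intro i
      have h : (∫ x, (lapl ψ x : ℂ) * (starRingEnd ℂ) (pdC u i x) * pdC u i x).re
          = ∫ x, ((lapl ψ x : ℂ) * (starRingEnd ℂ) (pdC u i x) * pdC u i x).re :=
        (integral_re (iP2 i)).symm
      rw [h]
      apply integral_congr_ae (Filter.Eventually.of_forall ?_)
      intro x
      show (((lapl ψ x : ℂ) * (starRingEnd ℂ) (pdC u i x)) * pdC u i x).re = _
      rw [← Complex.normSq_eq_norm_sq]
      simp [Complex.mul_re, Complex.mul_im, Complex.conj_re, Complex.conj_im, Complex.normSq_apply]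
      ring
    have eNsum : (∫ x, lapl ψ x * (∑ i, ‖pdC u i x‖ ^ 2))
        = ∑ i, ∫ x, lapl ψ x * ‖pdC u i x‖ ^ 2 := by
      rw [← integral_finset_sum _ ?_]
      · apply integral_congr_ae (Filter.Eventually.of_forall ?_)
        intro x
        rw [Finset.mul_sum]
      · intro i _
        apply intR _ (hLc.mul ((hVc i).norm.pow 2))
        intro x hx; simp only [Pi.mul_apply, Pi.add_apply, Function.comp_apply]; rw [hzL x hx]; ring
    rw [Complex.re_sum]
    simp only [Complex.neg_re, Complex.add_re]
    rw [eS2, Complex.re_sum, eNsum]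
    rw [Finset.sum_congr rfl (fun i (_ : i ∈ Finset.univ) => by rw [eN i] :
      ∀ i ∈ Finset.univ, -((∫ x, (pd (fun y => lapl ψ y) i x : ℂ) * pdC u i x
          * (starRingEnd ℂ) (u x)).re
        + (∫ x, (lapl ψ x : ℂ) * (starRingEnd ℂ) (pdC u i x) * pdC u i x).re)
        = -((∫ x, (pd (fun y => lapl ψ y) i x : ℂ) * pdC u i x * (starRingEnd ℂ) (u x)).re
        + ∫ x, lapl ψ x * ‖pdC u i x‖ ^ 2))]
    simp only [neg_add, Finset.sum_add_distrib, Finset.sum_neg_distrib]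
    ring
  have P5 : (∫ x, (∑ i, pdC (fun y => pdC u i y) i x)
        * ((lapl ψ x : ℂ) * (starRingEnd ℂ) (u x))).re
      = (∫ x, f x * (lapl ψ x : ℂ) * (starRingEnd ℂ) (u x)).re
        - (∫ x, (p x + lam) * lapl ψ x * ‖u x‖ ^ 2)
        - (∫ x, Q x * lapl ψ x * ‖u x‖ ^ 2) := by
    have hBc : Continuous fun x => (lapl ψ x : ℂ) * (starRingEnd ℂ) (u x) :=
      hLC_c.mul hconjuc
    have hB0 : ∀ x ∉ tsupport ψ, (lapl ψ x : ℂ) * (starRingEnd ℂ) (u x) = 0 := by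
      intro x hx; rw [hzL x hx]; simp
    have hptw : ∀ x, (∑ i, pdC (fun y => pdC u i y) i x)
        * ((lapl ψ x : ℂ) * (starRingEnd ℂ) (u x))
        = f x * ((lapl ψ x : ℂ) * (starRingEnd ℂ) (u x))
          - (((p x : ℂ) + lam) * u x) * ((lapl ψ x : ℂ) * (starRingEnd ℂ) (u x))
          - ((Q x : ℂ) * u x) * ((lapl ψ x : ℂ) * (starRingEnd ℂ) (u x))
          - (I * eps) • (u x * ((lapl ψ x : ℂ) * (starRingEnd ℂ) (u x))) := by
      intro x
      have h := hueq x
      show laplC u x * _ = _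
      rw [smul_eq_mul]
      linear_combination ((lapl ψ x : ℂ) * (starRingEnd ℂ) (u x)) * h
    have j1 : Integrable (fun x => f x * ((lapl ψ x : ℂ) * (starRingEnd ℂ) (u x))) volume := by
      apply intC _ (hf.mul hBc)
      intro x hx; simp only [Pi.mul_apply, Pi.add_apply, Function.comp_apply]; rw [hB0 x hx, mul_zero]
    have j2 : Integrable (fun x => (((p x : ℂ) + lam) * u x)
        * ((lapl ψ x : ℂ) * (starRingEnd ℂ) (u x))) volume := by
      apply intC _ (((hpC.add continuous_const).mul huc).mul hBc)
      intro x hx; simp only [Pi.mul_apply, Pi.add_apply, Function.comp_apply]; rw [hB0 x hx, mul_zero]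
    have j3 : Integrable (fun x => ((Q x : ℂ) * u x)
        * ((lapl ψ x : ℂ) * (starRingEnd ℂ) (u x))) volume := by
      apply intC _ ((hQC.mul huc).mul hBc)
      intro x hx; simp only [Pi.mul_apply, Pi.add_apply, Function.comp_apply]; rw [hB0 x hx, mul_zero]
    have j4 : Integrable (fun x => (I * (eps : ℂ)) • (u x
        * ((lapl ψ x : ℂ) * (starRingEnd ℂ) (u x)))) volume := by
      apply intC _ (continuous_const.mul (huc.mul hBc))
      intro x hx; simp only [Pi.mul_apply, Pi.add_apply, Function.comp_apply]; rw [hB0 x hx]; simp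
    have j12 : Integrable (fun x => f x * ((lapl ψ x : ℂ) * (starRingEnd ℂ) (u x))
        - (((p x : ℂ) + lam) * u x) * ((lapl ψ x : ℂ) * (starRingEnd ℂ) (u x))) volume := j1.sub j2
    have j123 : Integrable (fun x => (f x * ((lapl ψ x : ℂ) * (starRingEnd ℂ) (u x))
        - (((p x : ℂ) + lam) * u x) * ((lapl ψ x : ℂ) * (starRingEnd ℂ) (u x)))
        - ((Q x : ℂ) * u x) * ((lapl ψ x : ℂ) * (starRingEnd ℂ) (u x))) volume := j12.sub j3
    have hsplit : (∫ x, (∑ i, pdC (fun y => pdC u i y) i x)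
          * ((lapl ψ x : ℂ) * (starRingEnd ℂ) (u x)))
        = (∫ x, f x * ((lapl ψ x : ℂ) * (starRingEnd ℂ) (u x)))
          - (∫ x, (((p x : ℂ) + lam) * u x) * ((lapl ψ x : ℂ) * (starRingEnd ℂ) (u x)))
          - (∫ x, ((Q x : ℂ) * u x) * ((lapl ψ x : ℂ) * (starRingEnd ℂ) (u x)))
          - (I * (eps : ℂ)) • (∫ x, u x * ((lapl ψ x : ℂ) * (starRingEnd ℂ) (u x))) := by
      rw [← integral_smul]
      rw [← integral_sub j1 j2, ← integral_sub j12 j3, ← integral_sub j123 j4]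
      exact integral_congr_ae (Filter.Eventually.of_forall hptw)
    rw [hsplit]
    simp only [Complex.sub_re]
    -- the f-term
    have e1 : (∫ x, f x * ((lapl ψ x : ℂ) * (starRingEnd ℂ) (u x)))
        = ∫ x, f x * (lapl ψ x : ℂ) * (starRingEnd ℂ) (u x) := by
      congr 1; funext x; ring
    -- the (p+lam)-term
    have e2 : (∫ x, (((p x : ℂ) + lam) * u x) * ((lapl ψ x : ℂ) * (starRingEnd ℂ) (u x))).re
        = ∫ x, (p x + lam) * lapl ψ x * ‖u x‖ ^ 2 := by
      have h : (∫ x, (((p x : ℂ) + lam) * u x) * ((lapl ψ x : ℂ) * (starRingEnd ℂ) (u x))).re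
          = ∫ x, ((((p x : ℂ) + lam) * u x) * ((lapl ψ x : ℂ) * (starRingEnd ℂ) (u x))).re :=
        (integral_re j2).symm
      rw [h]
      apply integral_congr_ae (Filter.Eventually.of_forall ?_)
      intro x
      show _ = (p x + lam) * lapl ψ x * ‖u x‖ ^ 2
      rw [← Complex.normSq_eq_norm_sq]
      simp [Complex.mul_re, Complex.mul_im, Complex.conj_re, Complex.conj_im,
        Complex.normSq_apply]
      ring
    -- the Q-term
    have e3 : (∫ x, ((Q x : ℂ) * u x) * ((lapl ψ x : ℂ) * (starRingEnd ℂ) (u x))).re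
        = ∫ x, Q x * lapl ψ x * ‖u x‖ ^ 2 := by
      have h : (∫ x, ((Q x : ℂ) * u x) * ((lapl ψ x : ℂ) * (starRingEnd ℂ) (u x))).re
          = ∫ x, (((Q x : ℂ) * u x) * ((lapl ψ x : ℂ) * (starRingEnd ℂ) (u x))).re :=
        (integral_re j3).symm
      rw [h]
      apply integral_congr_ae (Filter.Eventually.of_forall ?_)
      intro x
      show _ = Q x * lapl ψ x * ‖u x‖ ^ 2
      rw [← Complex.normSq_eq_norm_sq]
      simp [Complex.mul_re, Complex.mul_im, Complex.conj_re, Complex.conj_im,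
        Complex.normSq_apply]
      ring
    -- the iε-term vanishes
    have e4 : ((I * (eps : ℂ)) • (∫ x, u x * ((lapl ψ x : ℂ) * (starRingEnd ℂ) (u x)))).re
        = 0 := by
      have h : (∫ x, u x * ((lapl ψ x : ℂ) * (starRingEnd ℂ) (u x)))
          = ∫ x, ((lapl ψ x * ‖u x‖ ^ 2 : ℝ) : ℂ) := by
        apply integral_congr_ae (Filter.Eventually.of_forall ?_)
        intro x
        apply Complex.ext
        · rw [← Complex.normSq_eq_norm_sq]
          simp [Complex.mul_re, Complex.mul_im, Complex.conj_re, Complex.conj_im,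
            Complex.normSq_apply]
          ring
        · show (u x * ((lapl ψ x : ℂ) * (starRingEnd ℂ) (u x))).im
            = ((lapl ψ x * ‖u x‖ ^ 2 : ℝ) : ℂ).im
          rw [Complex.ofReal_im]
          simp only [Complex.mul_im, Complex.mul_re, Complex.ofReal_re, Complex.ofReal_im,
            Complex.conj_re, Complex.conj_im]
          ring
      have h2 : (∫ x, ((lapl ψ x * ‖u x‖ ^ 2 : ℝ) : ℂ))
          = (((∫ x, lapl ψ x * ‖u x‖ ^ 2) : ℝ) : ℂ) := integral_ofReal
      rw [h, h2, smul_eq_mul]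
      simp [Complex.mul_re]
    rw [e1, e2, e3, e4]
    ring
  -- regularity of N = |∇u|²
  have hN1 : ContDiff ℝ 1 fun x => ∑ i, ‖pdC u i x‖ ^ 2 := by
    apply ContDiff.sum
    intro i _
    have h1 : (fun y : Euc d => ‖pdC u i y‖ ^ 2)
        = fun y => ((starRingEnd ℂ) (pdC u i y) * pdC u i y).re := by
      funext y
      simp [Complex.mul_re, Complex.sq_norm, Complex.normSq_apply]
    rw [h1]
    exact (Complex.reCLM.contDiff).comp
      (((Complex.conjCLE.toContinuousLinearMap.contDiff).comp (hV1 i)).mul (hV1 i))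
  have hNd : Differentiable ℝ fun x => ∑ i, ‖pdC u i x‖ ^ 2 := hN1.differentiable one_ne_zero
  have hDN_c : ∀ j : Fin d, Continuous fun x =>
      fderiv ℝ (fun y => ∑ i, ‖pdC u i y‖ ^ 2) x (EuclideanSpace.single j 1) := fun j =>
    (contDiff_fderiv_apply (m := 0) hN1 (by norm_num) _).continuous
  have hψ1C : ∀ j : Fin d, Continuous fun x => ((pd ψ j x : ℝ) : ℂ) :=
    fun j => Complex.continuous_ofReal.comp (hψ1c j)
  have hψ2C : ∀ i j : Fin d, Continuous fun x => ((pd2 ψ i j x : ℝ) : ℂ) :=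
    fun i j => Complex.continuous_ofReal.comp (hψ2c i j)
  have hstarW : ∀ i j : Fin d, Continuous fun x =>
      (starRingEnd ℂ) (pdC (fun y => pdC u j y) i x) := fun i j => (hWc i j).star
  have P1 : (∫ x, (∑ i, pdC (fun y => pdC u i y) i x)
        * (∑ j, (pd ψ j x : ℂ) * (starRingEnd ℂ) (pdC u j x))).re
      = -(∫ x, ∑ i, ∑ j, (pd2 ψ i j x : ℂ) * pdC u i x * (starRingEnd ℂ) (pdC u j x)).re
        + (1/2) * ∫ x, lapl ψ x * (∑ i, ‖pdC u i x‖ ^ 2) := by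
    -- integrability of the basic products
    have iFG : ∀ i j : Fin d, Integrable (fun x =>
        ((pd ψ j x : ℂ) * (starRingEnd ℂ) (pdC u j x)) * pdC (fun y => pdC u i y) i x)
        volume := by
      intro i j
      apply intC _ (((hψ1C j).mul (hstarV j)).mul (hWc i i))
      intro x hx; simp only [Pi.mul_apply, Pi.add_apply, Function.comp_apply]; rw [hz1 j x hx]; simp
    -- split the double sum
    have hsplit : (∫ x, (∑ i, pdC (fun y => pdC u i y) i x)
          * (∑ j, (pd ψ j x : ℂ) * (starRingEnd ℂ) (pdC u j x)))
        = ∑ i : Fin d, ∑ j : Fin d, ∫ x,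
            ((pd ψ j x : ℂ) * (starRingEnd ℂ) (pdC u j x)) * pdC (fun y => pdC u i y) i x := by
      rw [Finset.sum_congr rfl (fun i (_ : i ∈ Finset.univ) =>
        (integral_finset_sum _ (fun j _ => iFG i j)).symm)]
      rw [← integral_finset_sum _ (fun i _ => (integrable_finset_sum _ (fun j _ => iFG i j)))]
      apply integral_congr_ae (Filter.Eventually.of_forall ?_)
      intro x
      rw [Finset.sum_mul]
      apply Finset.sum_congr rfl
      intro i _
      rw [Finset.mul_sum]
      apply Finset.sum_congr rfl
      intro j _
      ring
    -- integration by parts in each pair (i,j)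
    have hIBP : ∀ i j : Fin d, (∫ x,
          ((pd ψ j x : ℂ) * (starRingEnd ℂ) (pdC u j x)) * pdC (fun y => pdC u i y) i x)
        = - ∫ x, ((pd2 ψ i j x : ℂ) * (starRingEnd ℂ) (pdC u j x)
            + (pd ψ j x : ℂ) * (starRingEnd ℂ) (pdC (fun y => pdC u j y) i x)) * pdC u i x := by
      intro i j
      apply ibp_wrap (𝕜 := ℂ) i
        (F := fun x => (pd ψ j x : ℂ) * (starRingEnd ℂ) (pdC u j x))
        (G := fun x => pdC u i x)
        (F' := fun x => (pd2 ψ i j x : ℂ) * (starRingEnd ℂ) (pdC u j x)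
          + (pd ψ j x : ℂ) * (starRingEnd ℂ) (pdC (fun y => pdC u j y) i x))
        (G' := fun x => pdC (fun y => pdC u i y) i x)
      · exact (differentiable_ofReal (hψ1d j)).mul (differentiable_conj (hVd j))
      · exact hVd i
      · intro x
        rw [fderiv_fun_mul ((differentiable_ofReal (hψ1d j)) x) ((differentiable_conj (hVd j)) x)]
        simp only [ContinuousLinearMap.add_apply, ContinuousLinearMap.smul_apply, smul_eq_mul]
        rw [fderiv_ofReal_apply ((hψ1d j) x), fderiv_conj_apply ((hVd j) x)]
        show (pd ψ j x : ℂ) * (starRingEnd ℂ) (pdC (fun y => pdC u j y) i x)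
          + (starRingEnd ℂ) (pdC u j x) * (pd2 ψ i j x : ℂ) = _
        ring
      · intro x; rfl
      · apply intC _ ((((hψ2C i j).mul (hstarV j)).add
          ((hψ1C j).mul (hstarW i j))).mul (hVc i))
        intro x hx; simp only [Pi.mul_apply, Pi.add_apply, Function.comp_apply]; rw [hz1 j x hx, hz2 i j x hx]; simp
      · exact iFG i j
      · apply intC _ (((hψ1C j).mul (hstarV j)).mul (hVc i))
        intro x hx; simp only [Pi.mul_apply, Pi.add_apply, Function.comp_apply]; rw [hz1 j x hx]; simp
    -- split the result of the IBP into two pieces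
    have iK1 : ∀ i j : Fin d, Integrable (fun x =>
        (pd2 ψ i j x : ℂ) * pdC u i x * (starRingEnd ℂ) (pdC u j x)) volume := by
      intro i j
      apply intC _ (((hψ2C i j).mul (hVc i)).mul (hstarV j))
      intro x hx; simp only [Pi.mul_apply, Pi.add_apply, Function.comp_apply]; rw [hz2 i j x hx]; simp
    have iK2 : ∀ i j : Fin d, Integrable (fun x =>
        (pd ψ j x : ℂ) * (starRingEnd ℂ) (pdC (fun y => pdC u j y) i x) * pdC u i x) volume := by
      intro i j
      apply intC _ (((hψ1C j).mul (hstarW i j)).mul (hVc i))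
      intro x hx; simp only [Pi.mul_apply, Pi.add_apply, Function.comp_apply]; rw [hz1 j x hx]; simp
    have hsplit2 : ∀ i j : Fin d, (∫ x, ((pd2 ψ i j x : ℂ) * (starRingEnd ℂ) (pdC u j x)
          + (pd ψ j x : ℂ) * (starRingEnd ℂ) (pdC (fun y => pdC u j y) i x)) * pdC u i x)
        = (∫ x, (pd2 ψ i j x : ℂ) * pdC u i x * (starRingEnd ℂ) (pdC u j x))
          + ∫ x, (pd ψ j x : ℂ) * (starRingEnd ℂ) (pdC (fun y => pdC u j y) i x) * pdC u i x := by
      intro i j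
      rw [← integral_add (iK1 i j) (iK2 i j)]
      apply integral_congr_ae (Filter.Eventually.of_forall ?_)
      intro x; ring
    rw [hsplit, Finset.sum_congr rfl (fun i (_ : i ∈ Finset.univ) =>
      Finset.sum_congr rfl (fun j (_ : j ∈ Finset.univ) => by rw [hIBP i j, hsplit2 i j]))]
    -- now take real parts
    rw [Complex.re_sum]
    rw [Finset.sum_congr rfl (fun i (_ : i ∈ Finset.univ) => Complex.re_sum _ _)]
    simp only [Complex.neg_re, Complex.add_re]
    -- identify the first double sum with S1
    have eS1 : (∫ x, ∑ i, ∑ j, (pd2 ψ i j x : ℂ) * pdC u i x * (starRingEnd ℂ) (pdC u j x)).re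
        = ∑ i : Fin d, ∑ j : Fin d,
          (∫ x, (pd2 ψ i j x : ℂ) * pdC u i x * (starRingEnd ℂ) (pdC u j x)).re := by
      have h := (integral_finset_sum (μ := volume) Finset.univ
          (f := fun (i : Fin d) x => ∑ j, (pd2 ψ i j x : ℂ) * pdC u i x
            * (starRingEnd ℂ) (pdC u j x))
          (fun i _ => integrable_finset_sum _ (fun j _ => iK1 i j))).trans
        (Finset.sum_congr rfl fun i _ => integral_finset_sum _ (fun j _ => iK1 i j))
      rw [h, Complex.re_sum]
      exact Finset.sum_congr rfl fun i _ => Complex.re_sum _ _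
    -- the K2 double sum gives -(1/2) ∫ Δψ |∇u|²
    have eK2 : (∑ i : Fin d, ∑ j : Fin d, (∫ x, (pd ψ j x : ℂ)
          * (starRingEnd ℂ) (pdC (fun y => pdC u j y) i x) * pdC u i x).re)
        = -(1/2) * ∫ x, lapl ψ x * (∑ i, ‖pdC u i x‖ ^ 2) := by
      rw [Finset.sum_comm]
      -- fixed j : sum over i equals the ψ_j ∂_j N integral
      have ej : ∀ j : Fin d, (∑ i : Fin d, (∫ x, (pd ψ j x : ℂ)
            * (starRingEnd ℂ) (pdC (fun y => pdC u j y) i x) * pdC u i x).re)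
          = ∫ x, pd ψ j x * ((1/2) * fderiv ℝ (fun y => ∑ i, ‖pdC u i y‖ ^ 2) x
              (EuclideanSpace.single j 1)) := by
        intro j
        have hre : ∀ i : Fin d, (∫ x, (pd ψ j x : ℂ)
              * (starRingEnd ℂ) (pdC (fun y => pdC u j y) i x) * pdC u i x).re
            = ∫ x, ((pd ψ j x : ℂ)
              * (starRingEnd ℂ) (pdC (fun y => pdC u j y) i x) * pdC u i x).re :=
          fun i => (integral_re (iK2 i j)).symm
        rw [Finset.sum_congr rfl (fun i _ => hre i)]
        have iRe : ∀ i : Fin d, Integrable (fun x => ((pd ψ j x : ℂ)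
            * (starRingEnd ℂ) (pdC (fun y => pdC u j y) i x) * pdC u i x).re) volume := by
          intro i
          apply intR _ (Complex.continuous_re.comp
            (((hψ1C j).mul (hstarW i j)).mul (hVc i)))
          intro x hx; simp only [Pi.mul_apply, Pi.add_apply, Function.comp_apply]
          show ((pd ψ j x : ℂ) * (starRingEnd ℂ) (pdC (fun y => pdC u j y) i x)
            * pdC u i x).re = 0
          rw [hz1 j x hx]; simp
        rw [← integral_finset_sum _ (fun i _ => iRe i)]
        apply integral_congr_ae (Filter.Eventually.of_forall ?_)
        intro x
        rw [fderiv_fun_sum (fun i _ => (differentiable_norm_sq (hVd i)) x)]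
        rw [ContinuousLinearMap.sum_apply, Finset.mul_sum, Finset.mul_sum]
        apply Finset.sum_congr rfl
        intro i _
        rw [fderiv_norm_sq_comp_apply ((hVd i) x),
          show fderiv ℝ (fun y => pdC u i y) x (EuclideanSpace.single j 1)
            = pdC (fun y => pdC u i y) j x from rfl,
          ← pdC_symm hu i j x]
        simp [Complex.mul_re, Complex.mul_im, Complex.conj_re, Complex.conj_im]
        ring
      rw [Finset.sum_congr rfl (fun j _ => ej j)]
      -- integrate by parts in each j
      have hIBPj : ∀ j : Fin d, (∫ x, pd ψ j x
            * fderiv ℝ (fun y => ∑ i, ‖pdC u i y‖ ^ 2) x (EuclideanSpace.single j 1))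
          = - ∫ x, pd2 ψ j j x * (∑ i, ‖pdC u i x‖ ^ 2) := by
        intro j
        apply ibp_wrap (𝕜 := ℝ) j (F := fun x => pd ψ j x)
          (G := fun x => ∑ i, ‖pdC u i x‖ ^ 2)
          (F' := fun x => pd2 ψ j j x)
          (G' := fun x => fderiv ℝ (fun y => ∑ i, ‖pdC u i y‖ ^ 2) x
            (EuclideanSpace.single j 1))
        · exact hψ1d j
        · exact hNd
        · intro x; rfl
        · intro x; rfl
        · apply intR _ ((hψ2c j j).mul hNc)
          intro x hx; simp only [Pi.mul_apply, Pi.add_apply, Function.comp_apply]; rw [hz2 j j x hx, zero_mul]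
        · apply intR _ ((hψ1c j).mul (hDN_c j))
          intro x hx; simp only [Pi.mul_apply, Pi.add_apply, Function.comp_apply]; rw [hz1 j x hx, zero_mul]
        · apply intR _ ((hψ1c j).mul hNc)
          intro x hx; simp only [Pi.mul_apply, Pi.add_apply, Function.comp_apply]; rw [hz1 j x hx, zero_mul]
      have hstepj : ∀ j : Fin d, (∫ x, pd ψ j x
            * ((1/2) * fderiv ℝ (fun y => ∑ i, ‖pdC u i y‖ ^ 2) x
              (EuclideanSpace.single j 1)))
          = (1/2) * - ∫ x, pd2 ψ j j x * (∑ i, ‖pdC u i x‖ ^ 2) := by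
        intro j
        rw [← hIBPj j]
        rw [show (fun x => pd ψ j x * ((1/2) * fderiv ℝ (fun y => ∑ i, ‖pdC u i y‖ ^ 2) x
            (EuclideanSpace.single j 1)))
          = fun x => (1/2 : ℝ) • (pd ψ j x * fderiv ℝ (fun y => ∑ i, ‖pdC u i y‖ ^ 2) x
            (EuclideanSpace.single j 1)) from by
            funext x; simp [smul_eq_mul]; ring]
        rw [integral_smul]
        simp [smul_eq_mul]
      rw [Finset.sum_congr rfl (fun j _ => hstepj j)]
      have iS : ∀ j : Fin d, Integrable
          (fun x => pd2 ψ j j x * (∑ i, ‖pdC u i x‖ ^ 2)) volume := by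
        intro j
        apply intR _ ((hψ2c j j).mul hNc)
        intro x hx; simp only [Pi.mul_apply, Pi.add_apply, Function.comp_apply]; rw [hz2 j j x hx, zero_mul]
      rw [show ∑ j : Fin d, (1/2 : ℝ) * - ∫ x, pd2 ψ j j x * (∑ i, ‖pdC u i x‖ ^ 2)
          = -(1/2) * ∑ j : Fin d, ∫ x, pd2 ψ j j x * (∑ i, ‖pdC u i x‖ ^ 2) from by
        rw [Finset.mul_sum]; apply Finset.sum_congr rfl; intro j _; ring]
      rw [← integral_finset_sum _ (fun j _ => iS j)]
      congr 1
      apply integral_congr_ae (Filter.Eventually.of_forall ?_)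
      intro x
      simp only [lapl, Finset.sum_mul]
    -- final assembly of P1
    simp only [neg_add, Finset.sum_add_distrib, Finset.sum_neg_distrib]
    rw [eK2, ← eS1]
    ring
  linarith [P1, P2, P3, P4, P5]
end
end
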